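/- arXiv:1004.4194 — 3 statements merged into one kernel-verified Lean document; each statement's English description precedes it below -/
import Mathlib

section
/- Let M and N be polyhedra in R^n such that M ∩ N is a face of both M and N. If F is a face of M and G is a face of N, then F ∩ G is a face of M ∩ N. -/
open Set
open scoped Classical

/-- ℝⁿ as a Euclidean space. -/
abbrev Euc (n : ℕ) := EuclideanSpace ℝ (Fin n)

/-- A polyhedron: a nonempty intersection of finitely many closed halfspaces. -/
def IsPolyhedron {n : ℕ} (P : Set (Euc n)) : Prop :=
  P.Nonempty ∧ ∃ I : Finset ((Euc n →ₗ[ℝ] ℝ) × ℝ),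
    P = {x | ∀ h ∈ I, h.1 x ≤ h.2}

/-- `IsFace P F` : `F` is a face of the polyhedron `P`, i.e. `P` itself, the empty set,
or the intersection of `P` with a supporting hyperplane. -/
def IsFace {n : ℕ} (P F : Set (Euc n)) : Prop :=
  F = P ∨ F = ∅ ∨ ∃ (f : Euc n →ₗ[ℝ] ℝ) (c : ℝ), f ≠ 0 ∧
    (∀ x ∈ P, f x ≤ c) ∧ F = P ∩ {x | f x = c}

/-- Dimension of a subset of ℝⁿ: `-1` for the empty set, otherwise the dimension
of its affine hull (the rank of its `vectorSpan`). -/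
noncomputable def polyDim {n : ℕ} (S : Set (Euc n)) : ℤ :=
  if S = ∅ then -1 else (Module.finrank ℝ (vectorSpan ℝ S) : ℤ)

/-- All (nonempty) faces of members of a collection of polyhedra. -/
def withFaces {n : ℕ} (M : Set (Set (Euc n))) : Set (Set (Euc n)) :=
  {F | ∃ P ∈ M, IsFace P F ∧ F.Nonempty}

/-- A polyhedral complex: a finite nonempty collection of polyhedra, closed under
taking (nonempty) faces, in which the intersection of any two members is a face of each. -/
def IsPolyhedralComplex {n : ℕ} (C : Set (Set (Euc n))) : Prop :=
  C.Finite ∧ C.Nonempty ∧ (∀ P ∈ C, IsPolyhedron P) ∧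
  (∀ P ∈ C, ∀ F, IsFace P F → F.Nonempty → F ∈ C) ∧
  (∀ P ∈ C, ∀ Q ∈ C, IsFace P (P ∩ Q) ∧ IsFace Q (P ∩ Q))

/-- A pre-complex: a finite nonempty collection of polyhedra closed under taking faces. -/
def IsPreComplex {n : ℕ} (C : Set (Set (Euc n))) : Prop :=
  C.Finite ∧ C.Nonempty ∧ (∀ P ∈ C, IsPolyhedron P) ∧
  (∀ P ∈ C, ∀ F, IsFace P F → F.Nonempty → F ∈ C)

/-- `∩ₖ(𝓜)`: the union of all intersections `P ∩ Q`, for `P, Q ∈ 𝓜`, of dimension at most `k`. -/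
def interK {n : ℕ} (M : Set (Set (Euc n))) (k : ℤ) : Set (Euc n) :=
  {x | ∃ P ∈ M, ∃ Q ∈ M, x ∈ P ∩ Q ∧ polyDim (P ∩ Q) ≤ k}

/-! ### Hyperplane arrangements -/

/-- The affine hyperplane determined by a (nonzero) linear functional and a constant. -/
def Hyp {n : ℕ} (h : (Euc n →ₗ[ℝ] ℝ) × ℝ) : Set (Euc n) := {x | h.1 x = h.2}

/-- A hyperplane arrangement: each datum determines a genuine hyperplane. -/
def IsArrangement {n : ℕ} (A : Finset ((Euc n →ₗ[ℝ] ℝ) × ℝ)) : Prop :=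
  ∀ h ∈ A, h.1 ≠ 0

/-- The union of the hyperplanes of the arrangement. -/
def ArrUnion {n : ℕ} (A : Finset ((Euc n →ₗ[ℝ] ℝ) × ℝ)) : Set (Euc n) :=
  ⋃ h ∈ A, Hyp h

/-- A region of the arrangement: the closure of a connected component of the
complement of the union of the hyperplanes. -/
def IsRegion {n : ℕ} (A : Finset ((Euc n →ₗ[ℝ] ℝ) × ℝ)) (R : Set (Euc n)) : Prop :=
  ∃ x, x ∉ ArrUnion A ∧ R = closure (connectedComponentIn (ArrUnion A)ᶜ x)

/-- Two regions are adjacent when their intersection has codimension 1. -/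
def AdjacentReg {n : ℕ} (A : Finset ((Euc n →ₗ[ℝ] ℝ) × ℝ)) (Q R : Set (Euc n)) : Prop :=
  IsRegion A Q ∧ IsRegion A R ∧ Q ≠ R ∧ polyDim (Q ∩ R) = (n : ℤ) - 1

/-- The hyperplane `h` separates `Q` from `R`. -/
def Separates {n : ℕ} (h : (Euc n →ₗ[ℝ] ℝ) × ℝ) (Q R : Set (Euc n)) : Prop :=
  ∃ x ∈ Q, ∃ y ∈ R, (h.1 x < h.2 ∧ h.2 < h.1 y) ∨ (h.1 y < h.2 ∧ h.2 < h.1 x)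

/-- `S(Q,R)`: the set of hyperplanes of `A` separating `Q` from `R`. -/
def SepSet {n : ℕ} (A : Finset ((Euc n →ₗ[ℝ] ℝ) × ℝ)) (Q R : Set (Euc n)) :
    Set ((Euc n →ₗ[ℝ] ℝ) × ℝ) :=
  {h | h ∈ A ∧ Separates h Q R}

/-- A path of length `k` from `Q` to `R` in the adjacency graph of the arrangement. -/
def IsPathA {n : ℕ} (A : Finset ((Euc n →ₗ[ℝ] ℝ) × ℝ)) (γ : ℕ → Set (Euc n)) (k : ℕ)
    (Q R : Set (Euc n)) : Prop :=
  γ 0 = Q ∧ γ k = R ∧ (∀ i, i ≤ k → IsRegion A (γ i)) ∧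
  ∀ i, i < k → AdjacentReg A (γ i) (γ (i + 1))

/-- A reduced path: one of minimal length among all paths with the same endpoints. -/
def IsReducedPathA {n : ℕ} (A : Finset ((Euc n →ₗ[ℝ] ℝ) × ℝ)) (γ : ℕ → Set (Euc n)) (k : ℕ)
    (Q R : Set (Euc n)) : Prop :=
  IsPathA A γ k Q R ∧ ∀ γ' k', IsPathA A γ' k' Q R → k ≤ k'

/-- A codimension-2 face of the complex of the arrangement. -/
def IsCodim2Face {n : ℕ} (A : Finset ((Euc n →ₗ[ℝ] ℝ) × ℝ)) (F : Set (Euc n)) : Prop :=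
  ∃ R, IsRegion A R ∧ IsFace R F ∧ polyDim F = (n : ℤ) - 2

/-- The polygon of a codimension-2 face `F`: a cyclic arrangement (given as an
`m`-periodic sequence, injective on a period, with consecutive entries adjacent)
of all the regions containing `F`. -/
def IsPolygonCycleA {n : ℕ} (A : Finset ((Euc n →ₗ[ℝ] ℝ) × ℝ)) (F : Set (Euc n))
    (δ : ℕ → Set (Euc n)) (m : ℕ) : Prop :=
  3 ≤ m ∧ (∀ i, δ (i + m) = δ i) ∧
  (∀ i j, i < m → j < m → δ i = δ j → i = j) ∧
  (∀ i, i < m → AdjacentReg A (δ i) (δ (i + 1))) ∧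
  (∀ R, (∃ i, i < m ∧ δ i = R) ↔ (IsRegion A R ∧ F ⊆ R))

/-- A braid move on a path: replace a subpath `γ a, …, γ (a+m)` by another subpath with the
same endpoints, so that the two subpaths together form a polygon of some codimension-2 face. -/
def BraidMove {n : ℕ} (A : Finset ((Euc n →ₗ[ℝ] ℝ) × ℝ)) (γ : ℕ → Set (Euc n)) (k : ℕ)
    (γ' : ℕ → Set (Euc n)) (k' : ℕ) : Prop :=
  k' = k ∧ ∃ a m, 0 < m ∧ a + m ≤ k ∧
    (∀ i, i ≤ a → γ' i = γ i) ∧ (∀ i, a + m ≤ i → γ' i = γ i) ∧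
    ∃ F, IsCodim2Face A F ∧
      IsPolygonCycleA A F
        (fun i => if i % (2 * m) ≤ m then γ (a + i % (2 * m))
                  else γ' (a + 2 * m - i % (2 * m))) (2 * m)

/-- A nil move on a path: delete a subsequence `γ a, γ (a+1), γ (a+2)` with
`γ a = γ (a+2)`, replacing it by `γ a`. -/
def NilMove {n : ℕ} (γ : ℕ → Set (Euc n)) (k : ℕ) (γ' : ℕ → Set (Euc n)) (k' : ℕ) : Prop :=
  ∃ a, a + 2 ≤ k ∧ γ (a + 2) = γ a ∧ k' + 2 = k ∧
    (∀ i, i ≤ a → γ' i = γ i) ∧ (∀ i, a < i → γ' i = γ (i + 2))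

/-- One braid or nil move, as a relation on (path, length) pairs. -/
def BNMove {n : ℕ} (A : Finset ((Euc n →ₗ[ℝ] ℝ) × ℝ)) :
    ((ℕ → Set (Euc n)) × ℕ) → ((ℕ → Set (Euc n)) × ℕ) → Prop :=
  fun p q => BraidMove A p.1 p.2 q.1 q.2 ∨ NilMove p.1 p.2 q.1 q.2

/-- Path convexity: every path can be transformed into every reduced path with the same
endpoints by a sequence of braid moves and nil moves. -/
def PathConvex {n : ℕ} (A : Finset ((Euc n →ₗ[ℝ] ℝ) × ℝ)) : Prop :=
  ∀ Q R γ k ρ l, IsPathA A γ k Q R → IsReducedPathA A ρ l Q R →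
    ∃ σ : ℕ → Set (Euc n), Relation.ReflTransGen (BNMove A) (γ, k) (σ, l) ∧
      ∀ i, i ≤ l → σ i = ρ i

/-- Reduced-path connectivity: any two reduced paths with the same endpoints are related
by a sequence of braid moves. -/
def ReducedPathConnected {n : ℕ} (A : Finset ((Euc n →ₗ[ℝ] ℝ) × ℝ)) : Prop :=
  ∀ Q R γ k ρ l, IsReducedPathA A γ k Q R → IsReducedPathA A ρ l Q R →
    ∃ σ : ℕ → Set (Euc n),
      Relation.ReflTransGen (fun p q => BraidMove A p.1 p.2 q.1 q.2) (γ, k) (σ, l) ∧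
      ∀ i, i ≤ l → σ i = ρ i

/-! ### Complexes, coarsenings, polygon properties -/

/-- `F` is a face of the complex of the arrangement `A`. -/
def IsFaceOfArr {n : ℕ} (A : Finset ((Euc n →ₗ[ℝ] ℝ) × ℝ)) (F : Set (Euc n)) : Prop :=
  ∃ R, IsRegion A R ∧ IsFace R F

/-- `C` is a subcomplex of the complex `𝓒(A)` of the arrangement `A`. -/
def IsSubcomplexOfArr {n : ℕ} (A : Finset ((Euc n →ₗ[ℝ] ℝ) × ℝ))
    (C : Set (Set (Euc n))) : Prop :=
  IsPolyhedralComplex C ∧ ∀ F ∈ C, IsFaceOfArr A F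

/-- A complex is full-dimensional if every face lies in an `n`-dimensional face. -/
def FullDimensional {n : ℕ} (C : Set (Set (Euc n))) : Prop :=
  ∀ F ∈ C, ∃ M ∈ C, F ⊆ M ∧ polyDim M = (n : ℤ)

/-- Adjacency of two full-dimensional faces of a complex `C`. -/
def AdjacentIn {n : ℕ} (C : Set (Set (Euc n))) (M N : Set (Euc n)) : Prop :=
  M ∈ C ∧ N ∈ C ∧ polyDim M = (n : ℤ) ∧ polyDim N = (n : ℤ) ∧
  M ≠ N ∧ polyDim (M ∩ N) = (n : ℤ) - 1

/-- The polygon, in the adjacency graph of the complex `C`, of a codimension-2 face `F`: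
a cyclic arrangement of all the full-dimensional faces of `C` containing `F`. -/
def IsPolygonCycleC {n : ℕ} (C : Set (Set (Euc n))) (F : Set (Euc n))
    (δ : ℕ → Set (Euc n)) (m : ℕ) : Prop :=
  3 ≤ m ∧ (∀ i, δ (i + m) = δ i) ∧
  (∀ i j, i < m → j < m → δ i = δ j → i = j) ∧
  (∀ i, i < m → AdjacentIn C (δ i) (δ (i + 1))) ∧
  (∀ M, (∃ i, i < m ∧ δ i = M) ↔ (M ∈ C ∧ polyDim M = (n : ℤ) ∧ F ⊆ M))

/-- `C'` coarsens `C`: `C'` is a polyhedral complex with the same support, each of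
whose faces is a union of faces of `C`. -/
def Coarsens {n : ℕ} (C' C : Set (Set (Euc n))) : Prop :=
  IsPolyhedralComplex C' ∧ ⋃₀ C' = ⋃₀ C ∧ ∀ P ∈ C', ∃ S ⊆ C, P = ⋃₀ S

/-- `C'` is a pre-complex coarsening `C`. -/
def PreCoarsens {n : ℕ} (C' C : Set (Set (Euc n))) : Prop :=
  IsPreComplex C' ∧ ⋃₀ C' = ⋃₀ C ∧ ∀ P ∈ C', ∃ S ⊆ C, P = ⋃₀ S

/-- `E` is the edge set of the coarsening `C'` of `C`: an edge `M — N` of the adjacency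
graph of `C` is in `E` exactly when `M` and `N` lie in a common face of `C'`. -/
def IsEdgeSetOf {n : ℕ} (C C' : Set (Set (Euc n)))
    (E : Set (Euc n) → Set (Euc n) → Prop) : Prop :=
  ∀ M N, E M N ↔ (AdjacentIn C M N ∧ ∃ P ∈ C', M ⊆ P ∧ N ⊆ P)

/-- `Perp F`: the orthogonal complement of the direction of the affine hull of `F`. -/
def PerpSet {n : ℕ} (F : Set (Euc n)) : Set (Euc n) :=
  ((vectorSpan ℝ F)ᗮ : Submodule ℝ (Euc n))

/-- The cone of directions `v` in `W` along which one enters `M` from `x`. -/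
def ConeAt {n : ℕ} (x : Euc n) (W M : Set (Euc n)) : Set (Euc n) :=
  {v | v ∈ W ∧ ∃ ε : ℝ, 0 < ε ∧ x + ε • v ∈ M}

/-- The fan `C|_F` in `Perp F`: cones of the full-dimensional faces of `C` containing `F`,
together with all their faces. -/
def RestrFan {n : ℕ} (C : Set (Set (Euc n))) (F : Set (Euc n)) (x : Euc n) :
    Set (Set (Euc n)) :=
  withFaces {K | ∃ M ∈ C, polyDim M = (n : ℤ) ∧ F ⊆ M ∧ K = ConeAt x (PerpSet F) M}

/-- A fan: a polyhedral complex all of whose faces contain the origin. -/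
def IsFan {n : ℕ} (D : Set (Set (Euc n))) : Prop :=
  IsPolyhedralComplex D ∧ ∀ K ∈ D, (0 : Euc n) ∈ K

/-- The polygon property: for every codimension-2 face `F` of `C` not contained in the
boundary of the support, the restriction of `E` to the polygon of `F` is the edge set of a
fan in `Perp F` coarsening `C|_F`. -/
def PolygonProperty {n : ℕ} (C : Set (Set (Euc n)))
    (E : Set (Euc n) → Set (Euc n) → Prop) : Prop :=
  ∀ F ∈ C, polyDim F = (n : ℤ) - 2 → ¬ F ⊆ frontier (⋃₀ C) →
  ∀ x ∈ intrinsicInterior ℝ F,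
  ∃ D, IsFan D ∧ ⋃₀ D = PerpSet F ∧ Coarsens D (RestrFan C F x) ∧
    ∀ M N, AdjacentIn C M N → F ⊆ M → F ⊆ N →
      (E M N ↔ ∃ K ∈ D, ConeAt x (PerpSet F) M ⊆ K ∧ ConeAt x (PerpSet F) N ⊆ K)

/-- The weak polygon property (for subcomplexes of arrangements, where every polygon is a
`2k`-gon): if `E` contains `k` consecutive edges of a `2k`-gon polygon, then it contains
all edges of that polygon. -/
def WeakPolygonPropertyC {n : ℕ} (C : Set (Set (Euc n)))
    (E : Set (Euc n) → Set (Euc n) → Prop) : Prop :=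
  ∀ F ∈ C, polyDim F = (n : ℤ) - 2 → ¬ F ⊆ frontier (⋃₀ C) →
  ∀ δ m k, IsPolygonCycleC C F δ m → m = 2 * k →
  ∀ a, (∀ i, i < k → E (δ (a + i)) (δ (a + i + 1))) →
    ∀ i, E (δ i) (δ (i + 1))

/-- The (combinatorial) polygon property for subcomplexes of arrangements: if `E` contains
`k - 1` consecutive edges of a `2k`-gon polygon, then it contains the opposite `k - 1`
consecutive edges. -/
def CombPolygonProperty {n : ℕ} (C : Set (Set (Euc n)))
    (E : Set (Euc n) → Set (Euc n) → Prop) : Prop :=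
  ∀ F ∈ C, polyDim F = (n : ℤ) - 2 → ¬ F ⊆ frontier (⋃₀ C) →
  ∀ δ m k, IsPolygonCycleC C F δ m → m = 2 * k →
  ∀ a, (∀ i, i + 1 < k → E (δ (a + i)) (δ (a + i + 1))) →
    ∀ i, i + 1 < k → E (δ (a + k + i)) (δ (a + k + i + 1))

/-! ### Zonotopes -/

/-- A zonotope: a Minkowski sum of finitely many segments. -/
def IsZonotope {n : ℕ} (Z : Set (Euc n)) : Prop :=
  ∃ (m : ℕ) (v : Fin m → Euc n),
    Z = {x | ∃ c : Fin m → ℝ, (∀ i, c i ∈ Icc (0 : ℝ) 1) ∧ x = ∑ i, c i • v i}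

/-- The normal cone of a face `F` of `Z`. -/
def normalCone {n : ℕ} (Z F : Set (Euc n)) : Set (Euc n) :=
  {u | ∀ y ∈ Z, ∀ x ∈ F, (inner ℝ u y : ℝ) ≤ (inner ℝ u x : ℝ)}

/-- The normal fan of `Z`: the normal cones of the nonempty faces of `Z`. -/
def normalFan {n : ℕ} (Z : Set (Euc n)) : Set (Set (Euc n)) :=
  {K | ∃ F, IsFace Z F ∧ F.Nonempty ∧ K = normalCone Z F}

/-- `e` is an edge of `Z` with endpoints `u` and `v`. -/
def IsEdgeOf {n : ℕ} (Z e : Set (Euc n)) (u v : Euc n) : Prop :=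
  IsFace Z e ∧ u ≠ v ∧ e = segment ℝ u v

/-- A cyclic listing of the vertices of a two-dimensional face `P` of `Z`, so that
consecutive vertices span the edges of `P`. -/
def IsVertexCycle {n : ℕ} (Z P : Set (Euc n)) (p : ℕ → Euc n) (m : ℕ) : Prop :=
  3 ≤ m ∧ (∀ i, p (i + m) = p i) ∧
  (∀ i j, i < m → j < m → p i = p j → i = j) ∧
  (∀ i, IsFace Z {p i}) ∧
  (∀ e, (IsFace P e ∧ polyDim e = 1) ↔ ∃ i, i < m ∧ e = segment ℝ (p i) (p (i + 1)))

/-- The zonotopal polygon property: if `𝓔` contains `k - 1` consecutive edges of a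
`2k`-gonal 2-face of `Z`, it contains the opposite `k - 1` consecutive edges. -/
def ZonotopalPolygonProperty {n : ℕ} (Z : Set (Euc n)) (𝓔 : Set (Set (Euc n))) : Prop :=
  ∀ P, IsFace Z P → polyDim P = 2 →
  ∀ p m k, IsVertexCycle Z P p m → m = 2 * k →
  ∀ a, (∀ i, i + 1 < k → segment ℝ (p (a + i)) (p (a + i + 1)) ∈ 𝓔) →
    ∀ i, i + 1 < k → segment ℝ (p (a + k + i)) (p (a + k + i + 1)) ∈ 𝓔

lemma face_subset' {n : ℕ} {P F : Set (Euc n)} (h : IsFace P F) : F ⊆ P := by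
  rcases h with rfl | rfl | ⟨f, c, _, _, rfl⟩
  · exact subset_rfl
  · exact empty_subset _
  · exact inter_subset_left

lemma face_restrict' {n : ℕ} {P Q F : Set (Euc n)} (hF : IsFace P F) (hQ : Q ⊆ P) :
    IsFace Q (F ∩ Q) := by
  rcases hF with rfl | rfl | ⟨f, c, hf0, hle, rfl⟩
  · left; exact inter_eq_self_of_subset_right hQ
  · right; left; simp
  · right; right
    refine ⟨f, c, hf0, fun x hx => hle x (hQ hx), ?_⟩
    ext x; simp only [mem_inter_iff, mem_setOf_eq]; tauto

lemma isFace_inter' {n : ℕ} {P F1 F2 : Set (Euc n)} (h1 : IsFace P F1)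
    (h2 : IsFace P F2) : IsFace P (F1 ∩ F2) := by
  have s1 := face_subset' h1
  have s2 := face_subset' h2
  rcases h1 with rfl | rfl | ⟨f, c, hf0, hfle, rfl⟩
  · rw [inter_eq_self_of_subset_right s2]; exact h2
  · right; left; simp
  · rcases h2 with rfl | rfl | ⟨g, d, hg0, hgle, rfl⟩
    · rw [inter_eq_self_of_subset_left s1]
      right; right; exact ⟨f, c, hf0, hfle, rfl⟩
    · right; left; simp
    · by_cases hfg : f + g = 0
      · rcases eq_empty_or_nonempty ((P ∩ {x | f x = c}) ∩ (P ∩ {x | g x = d})) with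
          he | ⟨x0, ⟨⟨hx0P, hx0f⟩, _, hx0g⟩⟩
        · right; left; exact he
        · have hgf : ∀ x, g x = - f x := fun x => by
            have := LinearMap.congr_fun hfg x
            simp only [LinearMap.add_apply, LinearMap.zero_apply] at this
            linarith
          have hdc : d = -c := by rw [← hx0f, ← hx0g, hgf]
          have hall : ∀ x ∈ P, f x = c := by
            intro x hx
            have h1 := hfle x hx
            have h2 := hgle x hx
            rw [hgf, hdc] at h2
            linarith
          left
          ext x
          simp only [mem_inter_iff, mem_setOf_eq]
          constructor
          · tauto
          · intro hx
            refine ⟨⟨hx, hall x hx⟩, hx, ?_⟩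
            rw [hgf, hall x hx, hdc]
      · right; right
        refine ⟨f + g, c + d, hfg, fun x hx => ?_, ?_⟩
        · simpa using add_le_add (hfle x hx) (hgle x hx)
        · ext x
          simp only [mem_inter_iff, mem_setOf_eq, LinearMap.add_apply]
          constructor
          · rintro ⟨⟨hP, hfc⟩, _, hgd⟩; exact ⟨hP, by rw [hfc, hgd]⟩
          · rintro ⟨hP, hsum⟩
            have h1 := hfle x hP
            have h2 := hgle x hP
            have hfc : f x = c := by linarith
            exact ⟨⟨hP, hfc⟩, hP, by linarith⟩

/-- If `M ∩ N` is a face of both polyhedra `M` and `N`, and `F`, `G` are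
faces of `M`, `N` respectively, then `F ∩ G` is a face of `M ∩ N`. -/
theorem face_inter_face {n : ℕ} (M N F G : Set (Euc n))
    (hM : IsPolyhedron M) (hN : IsPolyhedron N)
    (h1 : IsFace M (M ∩ N)) (h2 : IsFace N (M ∩ N))
    (hF : IsFace M F) (hG : IsFace N G) :
    IsFace (M ∩ N) (F ∩ G) := by
  have hFsub : F ⊆ M := face_subset' hF
  have hGsub : G ⊆ N := face_subset' hG
  have key : F ∩ G = (F ∩ (M ∩ N)) ∩ (G ∩ (M ∩ N)) := by
    ext x
    simp only [mem_inter_iff]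
    constructor
    · rintro ⟨hxF, hxG⟩
      exact ⟨⟨hxF, hFsub hxF, hGsub hxG⟩, hxG, hFsub hxF, hGsub hxG⟩
    · tauto
  rw [key]
  exact isFace_inter' (face_restrict' hF inter_subset_left)
    (face_restrict' hG inter_subset_right)
end

section
/- Fix an integer k ≥ −1 and let 𝓜 be a finite collection of polyhedra in R^n, each of dimension greater than k. Suppose (i) for every x in the support of 𝓜 there exists ε > 0 such that for all δ with 0 < δ < ε the set (Supp(𝓜) \ ∩_k(𝓜)) ∩ B_δ(x) is path connected, and (ii) M ∩ N is a face of M and of N for all M, N ∈ 𝓜 with dim(M ∩ N) > k. Then the collection of all polyhedra in 𝓜 and their faces is a polyhedral complex. -/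
open Set
open scoped Classical

namespace ShortcutProof

variable {n : ℕ}



lemma poly_closed {P : Set (Euc n)} (h : IsPolyhedron P) : IsClosed P := by
  obtain ⟨-, I, rfl⟩ := h
  have : {x : Euc n | ∀ h ∈ I, h.1 x ≤ h.2} = ⋂ h ∈ I, {x : Euc n | h.1 x ≤ h.2} := by
    ext x; simp
  rw [this]
  refine isClosed_biInter fun h _ => ?_
  exact isClosed_le (h.1.continuous_of_finiteDimensional) continuous_const

lemma poly_convex {P : Set (Euc n)} (h : IsPolyhedron P) : Convex ℝ P := by
  obtain ⟨-, I, rfl⟩ := h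
  intro x hx y hy a b ha hb hab
  intro g hg
  have hx' := hx g hg
  have hy' := hy g hg
  have : g.1 (a • x + b • y) = a * g.1 x + b * g.1 y := by
    simp [map_add, map_smul, smul_eq_mul]
  rw [this]
  calc a * g.1 x + b * g.1 y ≤ a * g.2 + b * g.2 := by
        exact add_le_add (mul_le_mul_of_nonneg_left hx' ha) (mul_le_mul_of_nonneg_left hy' hb)
    _ = g.2 := by rw [← add_mul, hab, one_mul]

lemma face_convex {P F : Set (Euc n)} (hP : Convex ℝ P) (hF : IsFace P F) : Convex ℝ F := by
  rcases hF with rfl | rfl | ⟨f, c, -, -, rfl⟩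
  · exact hP
  · exact convex_empty
  · exact hP.inter (convex_hyperplane f.isLinear c)

lemma face_subset {P F : Set (Euc n)} (hP : IsFace P F) : F ⊆ P := by
  rcases hP with rfl | rfl | ⟨f, c, -, -, rfl⟩
  · exact subset_rfl
  · exact empty_subset _
  · exact inter_subset_left

lemma face_poly {P F : Set (Euc n)} (hP : IsPolyhedron P) (hF : IsFace P F)
    (hne : F.Nonempty) : IsPolyhedron F := by
  rcases hF with rfl | rfl | ⟨f, c, -, -, rfl⟩
  · exact hP
  · exact absurd hne (by simp)
  · obtain ⟨-, I, rfl⟩ := hP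
    refine ⟨hne, I ∪ {(f, c), (-f, -c)}, ?_⟩
    ext x
    simp only [Finset.mem_union, Finset.mem_insert, Finset.mem_singleton, mem_inter_iff,
      mem_setOf_eq]
    constructor
    · rintro ⟨hx, hfc⟩ h hh
      rcases hh with hh | rfl | rfl
      · exact hx h hh
      · exact le_of_eq hfc
      · simp [hfc]
    · intro hx
      refine ⟨fun h hh => hx h (Or.inl hh), ?_⟩
      have h1 := hx (f, c) (Or.inr (Or.inl rfl))
      have h2 := hx (-f, -c) (Or.inr (Or.inr rfl))
      simp only [LinearMap.neg_apply, neg_le_neg_iff] at h2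
      exact le_antisymm h1 h2

/-- The minimal face of `P` at `x`, description-free. -/
def MinFaceAt (x : Euc n) (P : Set (Euc n)) : Set (Euc n) :=
  {y | y ∈ P ∧ ∃ s : ℝ, 0 < s ∧ x + s • (x - y) ∈ P}

lemma minFaceAt_subset {x : Euc n} {P : Set (Euc n)} : MinFaceAt x P ⊆ P := fun _ hy => hy.1

lemma mem_minFaceAt_self {x : Euc n} {P : Set (Euc n)} (hx : x ∈ P) : x ∈ MinFaceAt x P :=
  ⟨hx, 1, one_pos, by simpa using hx⟩



-- helper: uniform small s for finitely many linear conditions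
lemma exists_pos_forall {ι : Type*} (T : Finset ι) (g d : ι → ℝ) (hd : ∀ h ∈ T, 0 < d h) :
    ∃ s : ℝ, 0 < s ∧ ∀ h ∈ T, s * g h ≤ d h := by
  classical
  induction T using Finset.induction with
  | empty => exact ⟨1, one_pos, by simp⟩
  | @insert a T ha ih =>
    obtain ⟨s, hs, hall⟩ := ih (fun h hh => hd h (Finset.mem_insert_of_mem hh))
    have hda : 0 < d a := hd a (Finset.mem_insert_self a T)
    refine ⟨min s (d a / (|g a| + 1)), lt_min hs (by positivity), ?_⟩
    intro h hh
    have hmin_pos : 0 < min s (d a / (|g a| + 1)) := lt_min hs (by positivity)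
    rcases Finset.mem_insert.1 hh with rfl | hh
    · have h1 : min s (d h / (|g h| + 1)) * g h ≤ min s (d h / (|g h| + 1)) * |g h| :=
        mul_le_mul_of_nonneg_left (le_abs_self _) hmin_pos.le
      have h2 : min s (d h / (|g h| + 1)) * |g h| ≤ (d h / (|g h| + 1)) * |g h| :=
        mul_le_mul_of_nonneg_right (min_le_right _ _) (abs_nonneg _)
      have h3 : (d h / (|g h| + 1)) * |g h| ≤ d h := by
        rw [div_mul_eq_mul_div, div_le_iff₀ (by positivity)]
        nlinarith [abs_nonneg (g h)]
      linarith
    · rcases le_or_gt (g h) 0 with hg | hg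
      · have : min s (d a / (|g a| + 1)) * g h ≤ 0 := mul_nonpos_of_nonneg_of_nonpos hmin_pos.le hg
        linarith [hd h (Finset.mem_insert_of_mem hh)]
      · calc min s (d a / (|g a| + 1)) * g h ≤ s * g h :=
              mul_le_mul_of_nonneg_right (min_le_left _ _) hg.le
          _ ≤ d h := hall h hh

lemma linear_comb (f : Euc n →ₗ[ℝ] ℝ) (x y : Euc n) (s : ℝ) :
    f (x + s • (x - y)) = f x + s * (f x - f y) := by
  simp [map_add, map_smul, map_sub, smul_eq_mul]

/-- Characterization of the minimal face via active constraints. -/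
lemma minFaceAt_char {P : Set (Euc n)} {I : Finset ((Euc n →ₗ[ℝ] ℝ) × ℝ)}
    (hI : P = {x | ∀ h ∈ I, h.1 x ≤ h.2}) {x : Euc n} (hx : x ∈ P) :
    MinFaceAt x P = {y | y ∈ P ∧ ∀ h ∈ I, h.1 x = h.2 → h.1 y = h.2} := by
  ext y
  constructor
  · rintro ⟨hyP, s, hs, hz⟩
    refine ⟨hyP, fun h hh hxe => ?_⟩
    have hy' : h.1 y ≤ h.2 := by rw [hI] at hyP; exact hyP h hh
    have hz' : h.1 (x + s • (x - y)) ≤ h.2 := by rw [hI] at hz; exact hz h hh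
    rw [linear_comb, hxe] at hz'
    have : h.2 - h.1 y ≤ 0 := by nlinarith
    linarith
  · rintro ⟨hyP, htight⟩
    refine ⟨hyP, ?_⟩
    have hpos : ∀ h ∈ I.filter (fun h => h.1 x ≠ h.2), 0 < h.2 - h.1 x := by
      intro h hh
      obtain ⟨hh', hxe⟩ := Finset.mem_filter.1 hh
      have : h.1 x ≤ h.2 := by rw [hI] at hx; exact hx h hh'
      cases lt_or_eq_of_le this with
      | inl h' => linarith
      | inr h' => exact absurd h' hxe
    obtain ⟨s, hs, hall⟩ := exists_pos_forall (I.filter (fun h => h.1 x ≠ h.2))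
      (fun h => h.1 x - h.1 y) (fun h => h.2 - h.1 x) hpos
    refine ⟨s, hs, ?_⟩
    rw [hI]
    intro h hh
    rw [linear_comb]
    by_cases hxe : h.1 x = h.2
    · rw [hxe, htight h hh hxe]; simp
    · have := hall h (Finset.mem_filter.2 ⟨hh, hxe⟩)
      linarith

/-- The set of points of `P` tight on a subfamily `J` is a face of `P`. -/
lemma isFace_tightSet {P : Set (Euc n)} {I J : Finset ((Euc n →ₗ[ℝ] ℝ) × ℝ)}
    (hI : P = {x | ∀ h ∈ I, h.1 x ≤ h.2}) (hJ : J ⊆ I) :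
    IsFace P {y | y ∈ P ∧ ∀ h ∈ J, h.1 y = h.2} := by
  set f : Euc n →ₗ[ℝ] ℝ := ∑ h ∈ J, h.1 with hf
  set c : ℝ := ∑ h ∈ J, h.2 with hc
  have hfy : ∀ y : Euc n, f y = ∑ h ∈ J, h.1 y := by
    intro y; rw [hf]; simp [LinearMap.sum_apply]
  have hsupp : ∀ y ∈ P, f y ≤ c := by
    intro y hy
    rw [hfy, hc]
    refine Finset.sum_le_sum fun h hh => ?_
    rw [hI] at hy; exact hy h (hJ hh)
  have hkey : ∀ y ∈ P, (f y = c ↔ ∀ h ∈ J, h.1 y = h.2) := by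
    intro y hy
    constructor
    · intro he
      have hsum : ∑ h ∈ J, (h.2 - h.1 y) = 0 := by
        rw [Finset.sum_sub_distrib, ← hc, ← hfy, he, sub_self]
      intro h hh
      have := (Finset.sum_eq_zero_iff_of_nonneg (fun h hh => by
        rw [hI] at hy; linarith [hy h (hJ hh)] : ∀ h ∈ J, (0:ℝ) ≤ h.2 - h.1 y)).1 hsum h hh
      linarith
    · intro ht
      rw [hfy, hc]
      exact Finset.sum_congr rfl ht
  by_cases hf0 : f = 0
  · by_cases hc0 : ∃ y ∈ P, f y = c
    · left
      obtain ⟨y₀, hy₀, hy₀e⟩ := hc0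
      ext y
      simp only [mem_setOf_eq]
      constructor
      · exact fun h => h.1
      · intro hy
        refine ⟨hy, (hkey y hy).1 ?_⟩
        rw [hf0] at hy₀e ⊢
        simpa using hy₀e
    · right; left
      ext y
      simp only [mem_setOf_eq, mem_empty_iff_false, iff_false]
      rintro ⟨hy, ht⟩
      exact hc0 ⟨y, hy, (hkey y hy).2 ht⟩
  · right; right
    refine ⟨f, c, hf0, hsupp, ?_⟩
    ext y
    simp only [mem_setOf_eq, mem_inter_iff]
    constructor
    · rintro ⟨hy, ht⟩; exact ⟨hy, (hkey y hy).2 ht⟩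
    · rintro ⟨hy, he⟩; exact ⟨hy, (hkey y hy).1 he⟩

lemma minFaceAt_isFace {P : Set (Euc n)} (hP : IsPolyhedron P) {x : Euc n} (hx : x ∈ P) :
    IsFace P (MinFaceAt x P) := by
  obtain ⟨hne, I, hI⟩ := hP
  have := minFaceAt_char hI hx
  rw [this]
  have : {y | y ∈ P ∧ ∀ h ∈ I, h.1 x = h.2 → h.1 y = h.2}
      = {y | y ∈ P ∧ ∀ h ∈ I.filter (fun h => h.1 x = h.2), h.1 y = h.2} := by
    ext y
    simp only [mem_setOf_eq, Finset.mem_filter, and_imp]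
  rw [this]
  exact isFace_tightSet hI (Finset.filter_subset _ _)

lemma minFaceAt_poly {P : Set (Euc n)} (hP : IsPolyhedron P) {x : Euc n} (hx : x ∈ P) :
    IsPolyhedron (MinFaceAt x P) := by
  obtain ⟨hne, I, hI⟩ := hP
  rw [minFaceAt_char hI hx]
  refine ⟨⟨x, by rw [hI] at hx ⊢; exact ⟨hx, fun h hh he => he⟩⟩, ?_⟩
  refine ⟨I ∪ (I.filter (fun h => h.1 x = h.2)).image (fun h => (-h.1, -h.2)), ?_⟩
  ext y
  simp only [mem_setOf_eq, Finset.mem_union, Finset.mem_image, Finset.mem_filter]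
  constructor
  · rintro ⟨hyP, ht⟩ h hh
    rcases hh with hh | ⟨g, ⟨hg, hge⟩, rfl⟩
    · rw [hI] at hyP; exact hyP h hh
    · simp only [LinearMap.neg_apply, neg_le_neg_iff]
      exact le_of_eq (ht g hg hge).symm
  · intro hy
    have hyP : y ∈ P := by rw [hI]; exact fun h hh => hy h (Or.inl hh)
    refine ⟨hyP, fun h hh he => ?_⟩
    have h2 := hy (-h.1, -h.2) (Or.inr ⟨h, ⟨hh, he⟩, rfl⟩)
    simp only [LinearMap.neg_apply, neg_le_neg_iff] at h2
    rw [hI] at hyP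
    exact le_antisymm (hyP h hh) h2

/-- minimal faces are invariant under passing to faces. -/
lemma minFaceAt_face_eq {P F : Set (Euc n)} (hF : IsFace P F) {x : Euc n} (hx : x ∈ F) :
    MinFaceAt x P = MinFaceAt x F := by
  rcases hF with rfl | rfl | ⟨f, c, -, hsupp, rfl⟩
  · rfl
  · exact absurd hx (by simp)
  · obtain ⟨hxP, hxe⟩ := hx
    ext y
    constructor
    · rintro ⟨hyP, s, hs, hz⟩
      have h1 : f y ≤ c := hsupp y hyP
      have h2 : f (x + s • (x - y)) ≤ c := hsupp _ hz
      rw [linear_comb, hxe] at h2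
      have hye : f y = c := by nlinarith
      refine ⟨⟨hyP, hye⟩, s, hs, hz, ?_⟩
      rw [mem_setOf_eq, linear_comb, hxe, hye]; ring
    · rintro ⟨⟨hyP, -⟩, s, hs, hz, -⟩
      exact ⟨hyP, s, hs, hz⟩



lemma exists_step {F : Set (Euc n)} {x z : Euc n}
    (hx : x ∈ intrinsicInterior ℝ F) (hz : z ∈ F) :
    ∃ s : ℝ, 0 < s ∧ x + s • (x - z) ∈ F := by
  obtain ⟨w, hw, hwx⟩ := hx
  have hxA : x ∈ affineSpan ℝ F := hwx ▸ w.2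
  have hzA : z ∈ affineSpan ℝ F := subset_affineSpan ℝ F hz
  have hmem : ∀ t : ℝ, x + t • (x - z) ∈ affineSpan ℝ F := by
    intro t
    have := AffineSubspace.smul_vsub_vadd_mem (affineSpan ℝ F) t hxA hzA hxA
    simpa [vsub_eq_sub, vadd_eq_add, add_comm] using this
  set g : ℝ → affineSpan ℝ F := fun t => ⟨x + t • (x - z), hmem t⟩ with hg
  have hgc : Continuous g := by
    apply Continuous.subtype_mk
    exact continuous_const.add (continuous_id.smul continuous_const)
  have hg0 : g 0 = w := by
    apply Subtype.ext
    simp [hg, ← hwx]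
  have hU : IsOpen (g ⁻¹' interior ((↑) ⁻¹' F : Set (affineSpan ℝ F))) :=
    isOpen_interior.preimage hgc
  have h0 : (0 : ℝ) ∈ g ⁻¹' interior ((↑) ⁻¹' F : Set (affineSpan ℝ F)) := by
    simp only [mem_preimage, hg0]; exact hw
  obtain ⟨ε, hε, hball⟩ := Metric.isOpen_iff.1 hU 0 h0
  refine ⟨ε / 2, by positivity, ?_⟩
  have : (ε / 2 : ℝ) ∈ Metric.ball (0 : ℝ) ε := by
    rw [Metric.mem_ball, Real.dist_eq, sub_zero, abs_of_pos (by positivity : (0:ℝ) < ε/2)]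
    linarith
  have := hball this
  rw [mem_preimage] at this
  have := interior_subset this
  exact this

lemma face_eq_minFaceAt {P F : Set (Euc n)} (hF : IsFace P F) {x : Euc n}
    (hx : x ∈ intrinsicInterior ℝ F)
    (hface_eq : MinFaceAt x P = MinFaceAt x F) : F = MinFaceAt x P := by
  rw [hface_eq]
  apply Subset.antisymm
  · intro z hz
    obtain ⟨s, hs, hm⟩ := exists_step hx hz
    exact ⟨hz, s, hs, hm⟩
  · exact fun y hy => hy.1


/-- Near a point `y`, every member of a finite family of closed sets that meets a small
ball around `y` must contain `y`. -/
lemma exists_ball_avoid (𝒮 : Set (Set (Euc n))) (hfin : 𝒮.Finite)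
    (hcl : ∀ S ∈ 𝒮, IsClosed S) (y : Euc n) :
    ∃ δ : ℝ, 0 < δ ∧ ∀ S ∈ 𝒮, ∀ z ∈ Metric.ball y δ, z ∈ S → y ∈ S := by
  set T : Set (Euc n) := ⋃₀ {S | S ∈ 𝒮 ∧ y ∉ S} with hT
  have hTclosed : IsClosed T := by
    rw [hT, sUnion_eq_biUnion]
    exact (hfin.subset (fun S hS => hS.1)).isClosed_biUnion (fun S hS => hcl S hS.1)
  have hyT : y ∉ T := by
    rintro ⟨S, ⟨hS, hyS⟩, hy⟩
    exact hyS hy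
  have : Tᶜ ∈ nhds y := hTclosed.isOpen_compl.mem_nhds hyT
  obtain ⟨δ, hδ, hball⟩ := Metric.mem_nhds_iff.1 this
  refine ⟨δ, hδ, fun S hS z hz hzS => ?_⟩
  by_contra hyS
  exact hball hz ⟨S, ⟨hS, hyS⟩, hzS⟩

/-- A polyhedron of dimension `> k` is not locally covered by `interK M k`:
Baire category argument. -/
lemma exists_generic (M : Set (Set (Euc n))) (k : ℤ) (hfin : M.Finite)
    (hpoly : ∀ P ∈ M, IsPolyhedron P ∧ k < polyDim P)
    {P : Set (Euc n)} (hP : P ∈ M) {y : Euc n} (hy : y ∈ P) {δ : ℝ} (hδ : 0 < δ) :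
    ∃ p, p ∈ P ∩ Metric.ball y δ ∧ p ∉ interK M k := by
  by_contra hcon
  push_neg at hcon
  set V : Set (Euc n) := P ∩ Metric.ball y δ with hV
  have hVconv : Convex ℝ V := (poly_convex (hpoly P hP).1).inter (convex_ball y δ)
  have hyV : y ∈ V := ⟨hy, Metric.mem_ball_self hδ⟩
  have hVsub : V ⊆ interK M k := fun p hp => hcon p hp
  -- vectorSpan of V equals that of P
  have hspanPV : vectorSpan ℝ P ≤ vectorSpan ℝ V := by
    have key : ∀ p ∈ P, p - y ∈ vectorSpan ℝ V := by
      intro p hp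
      set t : ℝ := min 1 (δ / (2 * dist p y + 1)) with ht
      have htpos : 0 < t := lt_min one_pos (by positivity)
      have ht1 : t ≤ 1 := min_le_left _ _
      have hw : y + t • (p - y) ∈ P :=
        (poly_convex (hpoly P hP).1).add_smul_sub_mem hy hp ⟨htpos.le, ht1⟩
      have hwb : y + t • (p - y) ∈ Metric.ball y δ := by
        rw [Metric.mem_ball, dist_eq_norm]
        have : y + t • (p - y) - y = t • (p - y) := by abel
        rw [this, norm_smul, Real.norm_eq_abs, abs_of_pos htpos]
        have h2 : t ≤ δ / (2 * dist p y + 1) := min_le_right _ _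
        have h3 : ‖p - y‖ = dist p y := by rw [dist_eq_norm]
        rw [h3]
        calc t * dist p y ≤ (δ / (2 * dist p y + 1)) * dist p y := by
              exact mul_le_mul_of_nonneg_right h2 dist_nonneg
          _ < δ := by
              rw [div_mul_eq_mul_div, div_lt_iff₀ (by positivity)]
              nlinarith [dist_nonneg (x := p) (y := y), hδ]
      have hmem : (y + t • (p - y)) - y ∈ vectorSpan ℝ V := by
        have hwV : y + t • (p - y) ∈ V := ⟨hw, hwb⟩
        have := vsub_mem_vectorSpan ℝ hwV hyV
        simpa [vsub_eq_sub] using this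
      have : t • (p - y) ∈ vectorSpan ℝ V := by
        have h4 : (y + t • (p - y)) - y = t • (p - y) := by abel
        rwa [h4] at hmem
      have := (vectorSpan ℝ V).smul_mem t⁻¹ this
      rwa [smul_smul, inv_mul_cancel₀ htpos.ne', one_smul] at this
    rw [vectorSpan_def, Submodule.span_le]
    rintro v ⟨p, hp, q, hq, rfl⟩
    have h1 := key p hp
    have h2 := key q hq
    show p -ᵥ q ∈ _
    rw [vsub_eq_sub]
    have he : p - q = (p - y) - (q - y) := by abel
    rw [he]
    exact Submodule.sub_mem _ h1 h2
  -- the closure of V, a Baire space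
  set σ : Set (Euc n) := closure V with hσ
  have hσclosed : IsClosed σ := isClosed_closure
  have hσconv : Convex ℝ σ := hVconv.closure
  have hyσ : y ∈ σ := subset_closure hyV
  -- the finitely many low-dimensional pieces
  let ι : Type _ := ↥(M ×ˢ M)
  haveI : Finite ι := (hfin.prod hfin).to_subtype
  haveI : Countable ι := Finite.to_countable
  let C : ι → Set (Euc n) := fun i =>
    if polyDim (i.1.1 ∩ i.1.2) ≤ k then i.1.1 ∩ i.1.2 else ∅
  have hCclosed : ∀ i, IsClosed (C i) := by
    intro i
    by_cases hd : polyDim (i.1.1 ∩ i.1.2) ≤ k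
    · simp only [C, if_pos hd]
      exact ((poly_closed (hpoly _ i.2.1).1).inter (poly_closed (hpoly _ i.2.2).1))
    · simp only [C, if_neg hd]; exact isClosed_empty
  have hinterK : interK M k ⊆ ⋃ i, C i := by
    rintro x ⟨R, hR, S, hS, hx, hd⟩
    refine mem_iUnion.2 ⟨⟨(R, S), mem_prod.2 ⟨hR, hS⟩⟩, ?_⟩
    simp only [C, if_pos hd]
    exact hx
  have hcover : σ ⊆ ⋃ i, C i := by
    have : IsClosed (⋃ i, C i) := isClosed_iUnion_of_finite hCclosed
    exact closure_minimal (hVsub.trans hinterK) this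
  -- Baire
  haveI : Nonempty σ := ⟨⟨y, hyσ⟩⟩
  haveI : CompleteSpace σ := hσclosed.completeSpace_coe
  obtain ⟨i, u, hu⟩ := nonempty_interior_of_iUnion_of_closed
    (f := fun i => ((↑) ⁻¹' C i : Set σ))
    (fun i => (hCclosed i).preimage continuous_subtype_val)
    (by
      ext v
      simp only [mem_iUnion, mem_preimage, mem_univ, iff_true]
      exact mem_iUnion.1 (hcover v.2))
  obtain ⟨r, hr, hball⟩ := Metric.mem_nhds_iff.1 (mem_interior_iff_mem_nhds.1 hu)
  have huC : (u : Euc n) ∈ C i := Set.mem_preimage.mp (interior_subset hu)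
  have hdim : polyDim (i.1.1 ∩ i.1.2) ≤ k := by
    by_contra hd
    simp only [C, if_neg hd] at huC
    exact huC
  have hCi : C i = i.1.1 ∩ i.1.2 := by simp only [C, if_pos hdim]
  have hCine : (C i).Nonempty := ⟨u, huC⟩
  -- vectorSpan σ ≤ vectorSpan (C i)
  have hspan : vectorSpan ℝ σ ≤ vectorSpan ℝ (C i) := by
    have key : ∀ v ∈ σ, v - (u : Euc n) ∈ vectorSpan ℝ (C i) := by
      intro v hv
      set t : ℝ := min 1 (r / (2 * dist v (u : Euc n) + 1)) with ht
      have htpos : 0 < t := lt_min one_pos (by positivity)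
      have ht1 : t ≤ 1 := min_le_left _ _
      have hwσ : (u : Euc n) + t • (v - u) ∈ σ :=
        hσconv.add_smul_sub_mem u.2 hv ⟨htpos.le, ht1⟩
      have hwb : dist ((u : Euc n) + t • (v - u)) (u : Euc n) < r := by
        rw [dist_eq_norm]
        have h0 : (u : Euc n) + t • (v - u) - u = t • (v - u) := by abel
        rw [h0, norm_smul, Real.norm_eq_abs, abs_of_pos htpos]
        have h2 : t ≤ r / (2 * dist v (u : Euc n) + 1) := min_le_right _ _
        have h3 : ‖v - (u : Euc n)‖ = dist v (u : Euc n) := by rw [dist_eq_norm]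
        rw [h3]
        calc t * dist v (u : Euc n) ≤ (r / (2 * dist v (u : Euc n) + 1)) * dist v (u : Euc n) :=
              mul_le_mul_of_nonneg_right h2 dist_nonneg
          _ < r := by
              rw [div_mul_eq_mul_div, div_lt_iff₀ (by positivity)]
              nlinarith [dist_nonneg (x := v) (y := (u : Euc n)), hr]
      have hwC : (u : Euc n) + t • (v - u) ∈ C i := by
        have : (⟨(u : Euc n) + t • (v - u), hwσ⟩ : σ) ∈ Metric.ball u r := by
          rw [Metric.mem_ball, Subtype.dist_eq]
          exact hwb
        exact hball this
      have hmem : ((u : Euc n) + t • (v - u)) - (u : Euc n) ∈ vectorSpan ℝ (C i) := by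
        have := vsub_mem_vectorSpan ℝ hwC huC
        simpa [vsub_eq_sub] using this
      have h4 : ((u : Euc n) + t • (v - u)) - (u : Euc n) = t • (v - u) := by abel
      rw [h4] at hmem
      have := (vectorSpan ℝ (C i)).smul_mem t⁻¹ hmem
      rwa [smul_smul, inv_mul_cancel₀ htpos.ne', one_smul] at this
    rw [vectorSpan_def, Submodule.span_le]
    rintro w ⟨p, hp, q, hq, rfl⟩
    have h1 := key p hp
    have h2 := key q hq
    show p -ᵥ q ∈ _
    rw [vsub_eq_sub]
    have he : p - q = (p - (u : Euc n)) - (q - (u : Euc n)) := by abel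
    rw [he]
    exact Submodule.sub_mem _ h1 h2
  -- dimension contradiction
  have hPne : P.Nonempty := ⟨y, hy⟩
  have hPdim : k < (Module.finrank ℝ (vectorSpan ℝ P) : ℤ) := by
    have := (hpoly P hP).2
    rwa [polyDim, if_neg (Nonempty.ne_empty hPne)] at this
  have hCidim : (Module.finrank ℝ (vectorSpan ℝ (C i)) : ℤ) ≤ k := by
    rw [hCi] at hCine ⊢
    rwa [polyDim, if_neg (Nonempty.ne_empty hCine)] at hdim
  have hle : vectorSpan ℝ P ≤ vectorSpan ℝ (C i) :=
    hspanPV.trans ((vectorSpan_mono ℝ subset_closure).trans hspan)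
  have := Submodule.finrank_mono hle
  omega

/-- The key chain lemma: minimal faces at a common point of two members agree. -/
lemma minFaceAt_chain_eq (k : ℤ) (M : Set (Set (Euc n))) (hfin : M.Finite)
    (hpoly : ∀ P ∈ M, IsPolyhedron P ∧ k < polyDim P)
    (hi : ∀ x ∈ ⋃₀ M, ∃ ε : ℝ, 0 < ε ∧ ∀ δ : ℝ, 0 < δ → δ < ε →
      IsPathConnected ((⋃₀ M \ interK M k) ∩ Metric.ball x δ))
    (hii : ∀ P ∈ M, ∀ Q ∈ M, k < polyDim (P ∩ Q) →
      IsFace P (P ∩ Q) ∧ IsFace Q (P ∩ Q))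
    {P Q : Set (Euc n)} (hP : P ∈ M) (hQ : Q ∈ M) {y : Euc n}
    (hyP : y ∈ P) (hyQ : y ∈ Q) :
    MinFaceAt y P = MinFaceAt y Q := by
  have hclosed : ∀ S ∈ M, IsClosed S := fun S hS => poly_closed (hpoly S hS).1
  set adj : Set (Euc n) → Set (Euc n) → Prop := fun R S =>
    R ∈ M ∧ S ∈ M ∧ y ∈ R ∧ y ∈ S ∧ k < polyDim (R ∩ S) with hadj
  have step : ∀ {R S : Set (Euc n)}, adj R S → MinFaceAt y R = MinFaceAt y S := by
    rintro R S ⟨h1, h2, h3, h4, h5⟩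
    obtain ⟨fR, fS⟩ := hii R h1 S h2 h5
    rw [minFaceAt_face_eq fR ⟨h3, h4⟩, minFaceAt_face_eq fS ⟨h3, h4⟩]
  have chain : ∀ {R : Set (Euc n)}, Relation.ReflTransGen adj P R →
      MinFaceAt y P = MinFaceAt y R := by
    intro R h
    induction h with
    | refl => rfl
    | tail hab hbc ih => exact ih.trans (step hbc)
  have invariant : ∀ {R : Set (Euc n)}, Relation.ReflTransGen adj P R → R ∈ M ∧ y ∈ R := by
    intro R h
    induction h with
    | refl => exact ⟨hP, hyP⟩
    | tail hab hbc _ => exact ⟨hbc.2.1, hbc.2.2.2.1⟩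
  suffices hRTG : Relation.ReflTransGen adj P Q by exact chain hRTG
  -- set up the small ball at y
  obtain ⟨ε, hε, hconn⟩ := hi y ⟨P, hP, hyP⟩
  obtain ⟨δ₁, hδ₁, havoid₁⟩ := exists_ball_avoid M hfin hclosed y
  set δ : ℝ := min (ε / 2) δ₁ with hδdef
  have hδ : 0 < δ := lt_min (by positivity) hδ₁
  have hδε : δ < ε := lt_of_le_of_lt (min_le_left _ _) (by linarith)
  have hballsub : Metric.ball y δ ⊆ Metric.ball y δ₁ :=
    Metric.ball_subset_ball (min_le_right _ _)
  set A : Set (Euc n) := (⋃₀ M \ interK M k) ∩ Metric.ball y δ with hA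
  have hApc : IsPathConnected A := hconn δ hδ hδε
  -- generic points in P and Q near y
  obtain ⟨p, hp, hpnot⟩ := exists_generic M k hfin hpoly hP hyP hδ
  obtain ⟨q, hq, hqnot⟩ := exists_generic M k hfin hpoly hQ hyQ hδ
  have hpA : p ∈ A := ⟨⟨⟨P, hP, hp.1⟩, hpnot⟩, hp.2⟩
  have hqA : q ∈ A := ⟨⟨⟨Q, hQ, hq.1⟩, hqnot⟩, hq.2⟩
  obtain ⟨γ, hγ⟩ := hApc.joinedIn p hpA q hqA
  -- the union of the members reachable from P
  set T : Set (Euc n) := ⋃₀ {R | R ∈ M ∧ Relation.ReflTransGen adj P R} with hT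
  have hTclosed : IsClosed T := by
    rw [hT, sUnion_eq_biUnion]
    exact (hfin.subset (fun S hS => hS.1)).isClosed_biUnion (fun S hS => hclosed S hS.1)
  set U : Set unitInterval := ⇑γ ⁻¹' T with hU
  have hUclosed : IsClosed U := hTclosed.preimage γ.continuous
  have hUopen : IsOpen U := by
    rw [isOpen_iff_mem_nhds]
    intro t ht
    obtain ⟨R₀, ⟨hR₀M, hRTG⟩, hzR₀⟩ := ht
    set z : Euc n := γ t with hz
    obtain ⟨⟨hzSupp, hznot⟩, hzball⟩ := hγ t
    obtain ⟨r, hr, havoid⟩ := exists_ball_avoid M hfin hclosed z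
    have hnhds : ⇑γ ⁻¹' Metric.ball z r ∈ nhds t :=
      γ.continuous.continuousAt.preimage_mem_nhds (Metric.ball_mem_nhds z hr)
    refine Filter.mem_of_superset hnhds ?_
    intro t' ht'
    obtain ⟨⟨⟨S, hS, hz'S⟩, hz'not⟩, hz'ball⟩ := hγ t'
    have hzS : z ∈ S := havoid S hS (γ t') ht' hz'S
    have hyS : y ∈ S := havoid₁ S hS (γ t') (hballsub hz'ball) hz'S
    have hdim : k < polyDim (R₀ ∩ S) := by
      by_contra hle
      push_neg at hle
      exact hznot ⟨R₀, hR₀M, S, hS, ⟨hzR₀, hzS⟩, hle⟩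
    have hadjRS : adj R₀ S := ⟨hR₀M, hS, (invariant hRTG).2, hyS, hdim⟩
    exact ⟨S, ⟨hS, hRTG.tail hadjRS⟩, hz'S⟩
  have hU0 : (0 : unitInterval) ∈ U := by
    show γ 0 ∈ T
    rw [γ.source]
    exact ⟨P, ⟨hP, Relation.ReflTransGen.refl⟩, hp.1⟩
  have hUuniv : U = univ := (IsClopen.eq_univ ⟨hUclosed, hUopen⟩) ⟨0, hU0⟩
  have hU1 : γ 1 ∈ T := by
    have : (1 : unitInterval) ∈ U := hUuniv ▸ mem_univ _
    exact this
  rw [γ.target] at hU1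
  obtain ⟨S₁, ⟨hS₁, hRTG₁⟩, hqS₁⟩ := hU1
  have hdim : k < polyDim (S₁ ∩ Q) := by
    by_contra hle
    push_neg at hle
    exact hqnot ⟨S₁, hS₁, Q, hQ, ⟨hqS₁, hq.1⟩, hle⟩
  exact hRTG₁.tail ⟨hS₁, hQ, (invariant hRTG₁).2, hyQ, hdim⟩

end ShortcutProof

open ShortcutProof in
/-- the shortcut for proving that a collection of polyhedra is a polyhedral
complex (Theorem `shortcut`). -/
theorem shortcut {n : ℕ} (k : ℤ) (hk : -1 ≤ k) (M : Set (Set (Euc n)))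
    (hfin : M.Finite) (hne : M.Nonempty)
    (hpoly : ∀ P ∈ M, IsPolyhedron P ∧ k < polyDim P)
    (hi : ∀ x ∈ ⋃₀ M, ∃ ε : ℝ, 0 < ε ∧ ∀ δ : ℝ, 0 < δ → δ < ε →
      IsPathConnected ((⋃₀ M \ interK M k) ∩ Metric.ball x δ))
    (hii : ∀ P ∈ M, ∀ Q ∈ M, k < polyDim (P ∩ Q) →
      IsFace P (P ∩ Q) ∧ IsFace Q (P ∩ Q)) :
    IsPolyhedralComplex (withFaces M) := by
  have hpol : ∀ P ∈ M, IsPolyhedron P := fun P hP => (hpoly P hP).1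
  have hmemne : ∀ P ∈ M, P.Nonempty := by
    intro P hP
    rcases eq_empty_or_nonempty P with rfl | h
    · have := (hpoly ∅ hP).2
      rw [polyDim, if_pos rfl] at this
      omega
    · exact h
  -- the key statement
  have star : ∀ P ∈ M, ∀ Q ∈ M, ∀ y : Euc n, y ∈ P → y ∈ Q →
      MinFaceAt y P = MinFaceAt y Q := by
    intro P hP Q hQ y hyP hyQ
    exact minFaceAt_chain_eq k M hfin hpoly hi hii hP hQ hyP hyQ
  -- every nonempty face of a member is a minimal face at any intrinsic interior point
  have face_min : ∀ P ∈ M, ∀ F, IsFace P F → ∀ x ∈ intrinsicInterior ℝ F,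
      F = MinFaceAt x P := by
    intro P hP F hF x hx
    exact face_eq_minFaceAt hF hx (minFaceAt_face_eq hF (intrinsicInterior_subset hx))
  refine ⟨?_, ?_, ?_, ?_, ?_⟩
  · -- finiteness
    have : withFaces M = ⋃ P ∈ M, {F | IsFace P F ∧ F.Nonempty} := by
      ext F
      simp only [withFaces, mem_setOf_eq, mem_iUnion, exists_prop]
    rw [this]
    refine hfin.biUnion fun P hP => ?_
    obtain ⟨hPne, I, hI⟩ := hpol P hP
    refine Set.Finite.subset (I.powerset.finite_toSet.image
      (fun J : Finset ((Euc n →ₗ[ℝ] ℝ) × ℝ) => {y : Euc n | y ∈ P ∧ ∀ h ∈ J, h.1 y = h.2})) ?_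
    rintro F ⟨hF, hFne⟩
    obtain ⟨x, hx⟩ := hFne.intrinsicInterior (face_convex (poly_convex ⟨hPne, I, hI⟩) hF)
    have hxF : x ∈ F := intrinsicInterior_subset hx
    have hxP : x ∈ P := face_subset hF hxF
    have hFeq : F = MinFaceAt x P := face_min P hP F hF x hx
    rw [minFaceAt_char hI hxP] at hFeq
    refine ⟨I.filter (fun h => h.1 x = h.2), Finset.mem_coe.2 (Finset.mem_powerset.2 (Finset.filter_subset _ I)), ?_⟩
    rw [hFeq]
    ext y
    simp only [mem_setOf_eq, Finset.mem_filter, and_imp]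
  · -- nonemptiness
    obtain ⟨P, hP⟩ := hne
    exact ⟨P, P, hP, Or.inl rfl, hmemne P hP⟩
  · -- members are polyhedra
    rintro F ⟨P, hP, hF, hFne⟩
    exact face_poly (hpol P hP) hF hFne
  · -- closed under faces
    rintro F ⟨P, hP, hF, hFne⟩ G hG hGne
    obtain ⟨x, hx⟩ := hGne.intrinsicInterior
      (face_convex (face_convex (poly_convex (hpol P hP)) hF) hG)
    have hxG : x ∈ G := intrinsicInterior_subset hx
    have hxF : x ∈ F := face_subset hG hxG
    have hGeq : G = MinFaceAt x F := face_eq_minFaceAt hG hx (minFaceAt_face_eq hG hxG)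
    have hFeq : MinFaceAt x P = MinFaceAt x F := minFaceAt_face_eq hF hxF
    refine ⟨P, hP, ?_, hGne⟩
    rw [hGeq, ← hFeq]
    exact minFaceAt_isFace (hpol P hP) (face_subset hF hxF)
  · -- pairwise intersections are faces
    rintro F ⟨P, hP, hF, hFne⟩ G ⟨Q, hQ, hG, hGne⟩
    rcases eq_empty_or_nonempty (F ∩ G) with he | hne'
    · exact ⟨Or.inr (Or.inl he), Or.inr (Or.inl he)⟩
    · obtain ⟨x, hx⟩ := hne'.intrinsicInterior
        ((face_convex (poly_convex (hpol P hP)) hF).inter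
          (face_convex (poly_convex (hpol Q hQ)) hG))
      have hxFG : x ∈ F ∩ G := intrinsicInterior_subset hx
      have hxF : x ∈ F := hxFG.1
      have hxG : x ∈ G := hxFG.2
      have hxP : x ∈ P := face_subset hF hxF
      have hxQ : x ∈ Q := face_subset hG hxG
      have e1 : MinFaceAt x P = MinFaceAt x F := minFaceAt_face_eq hF hxF
      have e2 : MinFaceAt x Q = MinFaceAt x G := minFaceAt_face_eq hG hxG
      have e3 : MinFaceAt x P = MinFaceAt x Q := star P hP Q hQ x hxP hxQ
      have eFG : MinFaceAt x F = MinFaceAt x G := by rw [← e1, e3, e2]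
      have claim : F ∩ G = MinFaceAt x F := by
        apply Subset.antisymm
        · intro z hz
          obtain ⟨s, hs, hm⟩ := exists_step hx hz
          exact ⟨hz.1, s, hs, hm.1⟩
        · intro z hz
          exact ⟨minFaceAt_subset hz, minFaceAt_subset (eFG ▸ hz)⟩
      constructor
      · rw [claim]
        exact minFaceAt_isFace (face_poly (hpol P hP) hF hFne) hxF
      · rw [claim, eFG]
        exact minFaceAt_isFace (face_poly (hpol Q hQ) hG hGne) hxG
end

section
/- Let 𝓜 be a finite collection of d-dimensional polyhedra in R^n. Suppose (i) Supp(𝓜) is convex, and (ii) M ∩ N is a face of M and of N for all M, N ∈ 𝓜 with dim(M ∩ N) ≥ d − 1. Then the collection of all polyhedra in 𝓜 and their faces is a polyhedral complex. -/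
open Set
open scoped Classical

/-! ### Auxiliary development for the proof -/

namespace ShortcutAux

open Module Submodule

variable {n : ℕ}

abbrev LF (n : ℕ) := (Euc n →ₗ[ℝ] ℝ) × ℝ

/-- Solution set of a finite system of linear inequalities. -/
def sol (I : Finset (LF n)) : Set (Euc n) := {x | ∀ h ∈ I, h.1 x ≤ h.2}

lemma convex_sol (I : Finset (LF n)) : Convex ℝ (sol I) := by
  intro x hx y hy a b ha hb hab h hh
  have h1 := hx h hh
  have h2 := hy h hh
  have : h.1 (a • x + b • y) = a * h.1 x + b * h.1 y := by
    simp [map_add, map_smul, smul_eq_mul]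
  show h.1 (a • x + b • y) ≤ h.2
  calc h.1 (a • x + b • y) = a * h.1 x + b * h.1 y := this
    _ ≤ a * h.2 + b * h.2 := by
        apply add_le_add <;> [exact mul_le_mul_of_nonneg_left h1 ha;
          exact mul_le_mul_of_nonneg_left h2 hb]
    _ = h.2 := by rw [← add_mul, hab, one_mul]

lemma closed_sol (I : Finset (LF n)) : IsClosed (sol I) := by
  have : sol I = ⋂ h ∈ I, (h.1 ⁻¹' Set.Iic h.2 : Set (Euc n)) := by
    ext x; simp [sol]
  rw [this]
  exact isClosed_biInter fun h _ =>
    IsClosed.preimage h.1.continuous_of_finiteDimensional isClosed_Iic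

lemma isPolyhedron_sol {P : Set (Euc n)} (hP : IsPolyhedron P) :
    ∃ I : Finset (LF n), P = sol I := hP.2

lemma poly_convex {P : Set (Euc n)} (hP : IsPolyhedron P) : Convex ℝ P := by
  obtain ⟨I, rfl⟩ := isPolyhedron_sol hP; exact convex_sol I

lemma poly_closed {P : Set (Euc n)} (hP : IsPolyhedron P) : IsClosed P := by
  obtain ⟨I, rfl⟩ := isPolyhedron_sol hP; exact closed_sol I

/-- The radial cone of `S` at `z`. -/
def rad (z : Euc n) (S : Set (Euc n)) : Set (Euc n) :=
  {v | ∃ ε : ℝ, 0 < ε ∧ z + ε • v ∈ S}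

lemma rad_mono {z : Euc n} {S T : Set (Euc n)} (h : S ⊆ T) : rad z S ⊆ rad z T :=
  fun _ ⟨ε, hε, hm⟩ => ⟨ε, hε, h hm⟩

lemma mem_rad_of_mem {z s : Euc n} {S : Set (Euc n)} (hs : s ∈ S) : s - z ∈ rad z S :=
  ⟨1, one_pos, by simpa using hs⟩

lemma zero_mem_rad {z : Euc n} {S : Set (Euc n)} (hz : z ∈ S) : (0 : Euc n) ∈ rad z S :=
  ⟨1, one_pos, by simpa using hz⟩

/-- In a convex set, radial directions work for all small parameters. -/
lemma rad_small {z v : Euc n} {S : Set (Euc n)} (hS : Convex ℝ S) (hz : z ∈ S)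
    (hv : v ∈ rad z S) : ∃ ε : ℝ, 0 < ε ∧ ∀ t : ℝ, 0 ≤ t → t ≤ ε → z + t • v ∈ S := by
  obtain ⟨ε, hε, hm⟩ := hv
  refine ⟨ε, hε, fun t ht htε => ?_⟩
  have h1 : z + t • v = (1 - t/ε) • z + (t/ε) • (z + ε • v) := by
    have hεne : ε ≠ 0 := ne_of_gt hε
    rw [smul_add, smul_smul, div_mul_cancel₀ _ hεne]
    module
  rw [h1]
  exact hS hz hm (by
    rw [sub_nonneg]; exact div_le_one_of_le₀ htε hε.le) (div_nonneg ht hε.le) (by ring)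

lemma rad_inter {z : Euc n} {S T : Set (Euc n)} (hS : Convex ℝ S) (hT : Convex ℝ T)
    (hzS : z ∈ S) (hzT : z ∈ T) : rad z (S ∩ T) = rad z S ∩ rad z T := by
  apply Set.Subset.antisymm
  · exact Set.subset_inter (rad_mono Set.inter_subset_left)
      (rad_mono Set.inter_subset_right)
  · rintro v ⟨hvS, hvT⟩
    obtain ⟨ε₁, hε₁, h1⟩ := rad_small hS hzS hvS
    obtain ⟨ε₂, hε₂, h2⟩ := rad_small hT hzT hvT
    exact ⟨min ε₁ ε₂, lt_min hε₁ hε₂,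
      h1 _ (le_of_lt (lt_min hε₁ hε₂)) (min_le_left _ _),
      h2 _ (le_of_lt (lt_min hε₁ hε₂)) (min_le_right _ _)⟩

lemma rad_subset_vectorSpan {z : Euc n} {S : Set (Euc n)} (hz : z ∈ S) :
    rad z S ⊆ (vectorSpan ℝ S : Set (Euc n)) := by
  rintro v ⟨ε, hε, hm⟩
  have h1 : (z + ε • v) -ᵥ z ∈ vectorSpan ℝ S := vsub_mem_vectorSpan ℝ hm hz
  have h2 : (z + ε • v) -ᵥ z = ε • v := by simp [vsub_eq_sub]
  rw [h2] at h1
  have := Submodule.smul_mem (vectorSpan ℝ S) ε⁻¹ h1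
  rwa [smul_smul, inv_mul_cancel₀ (ne_of_gt hε), one_smul] at this

lemma span_rad_eq {z : Euc n} {S : Set (Euc n)} (hz : z ∈ S) :
    Submodule.span ℝ (rad z S) = vectorSpan ℝ S := by
  apply le_antisymm
  · rw [Submodule.span_le]; exact rad_subset_vectorSpan hz
  · rw [vectorSpan_eq_span_vsub_set_right ℝ hz]
    apply Submodule.span_mono
    rintro w ⟨s, hs, rfl⟩
    exact mem_rad_of_mem hs


/-- Perturbation lemma: if every constraint is either strict at `z`, or satisfied at `z`
with the direction `u` not increasing it, then `z + ε • u` stays in the solution set for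
all small `ε`. -/
lemma sol_perturb {I : Finset (LF n)} {z u : Euc n}
    (hc : ∀ h ∈ I, h.1 z < h.2 ∨ (h.1 z ≤ h.2 ∧ h.1 u ≤ 0)) :
    ∃ ε : ℝ, 0 < ε ∧ ∀ ε' : ℝ, 0 < ε' → ε' ≤ ε → z + ε' • u ∈ sol I := by
  classical
  set s : Finset (LF n) := I.filter (fun h => 0 < h.1 u) with hs
  by_cases hne : s.Nonempty
  · set ε : ℝ := (s.image (fun h => (h.2 - h.1 z) / (h.1 u))).min' (hne.image _) with hε
    have hpos : 0 < ε := by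
      rw [hε]
      apply (Finset.lt_min'_iff _ _).2
      intro y hy
      obtain ⟨h, hh, rfl⟩ := Finset.mem_image.1 hy
      have hhu : 0 < h.1 u := (Finset.mem_filter.1 hh).2
      have hhI : h ∈ I := (Finset.mem_filter.1 hh).1
      have hstrict : h.1 z < h.2 := by
        rcases hc h hhI with h1 | ⟨_, h2⟩
        · exact h1
        · exact absurd hhu (not_lt.2 h2)
      exact div_pos (by linarith) hhu
    refine ⟨ε, hpos, fun ε' hε' hε'ε h hh => ?_⟩
    have hval : h.1 (z + ε' • u) = h.1 z + ε' * h.1 u := by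
      simp [map_add, map_smul, smul_eq_mul]
    show h.1 (z + ε' • u) ≤ h.2
    rw [hval]
    by_cases hu : 0 < h.1 u
    · have hmem : h ∈ s := Finset.mem_filter.2 ⟨hh, hu⟩
      have hle : ε ≤ (h.2 - h.1 z) / (h.1 u) :=
        Finset.min'_le _ _ (Finset.mem_image_of_mem _ hmem)
      have : ε' * h.1 u ≤ h.2 - h.1 z := by
        rw [← le_div_iff₀ hu]; exact le_trans hε'ε hle
      linarith
    · push_neg at hu
      have h1 : h.1 z ≤ h.2 := by
        rcases hc h hh with h1 | ⟨h1, _⟩; exacts [h1.le, h1]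
      nlinarith
  · refine ⟨1, one_pos, fun ε' hε' _ h hh => ?_⟩
    have hu : ¬ 0 < h.1 u := fun hlt => hne ⟨h, Finset.mem_filter.2 ⟨hh, hlt⟩⟩
    push_neg at hu
    have h1 : h.1 z ≤ h.2 := by
      rcases hc h hh with h1 | ⟨h1, _⟩; exacts [h1.le, h1]
    show h.1 (z + ε' • u) ≤ h.2
    have hval : h.1 (z + ε' • u) = h.1 z + ε' * h.1 u := by
      simp [map_add, map_smul, smul_eq_mul]
    nlinarith

/-- Description of the radial cone of a polyhedron by the constraints tight at `z`. -/
lemma rad_sol {I : Finset (LF n)} {z : Euc n} (hz : z ∈ sol I) :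
    rad z (sol I) = {v | ∀ h ∈ I, h.1 z = h.2 → h.1 v ≤ 0} := by
  ext v
  constructor
  · rintro ⟨ε, hε, hm⟩ h hh heq
    have h1 : h.1 (z + ε • v) ≤ h.2 := hm h hh
    have h2 : h.1 (z + ε • v) = h.1 z + ε * h.1 v := by
      simp [map_add, map_smul, smul_eq_mul]
    rw [h2, heq] at h1
    nlinarith
  · intro hv
    obtain ⟨ε, hε, hmem⟩ := sol_perturb (I := I) (z := z) (u := v) (fun h hh => by
      by_cases heq : h.1 z = h.2
      · exact Or.inr ⟨heq.le, hv h hh heq⟩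
      · exact Or.inl (lt_of_le_of_ne (hz h hh) heq))
    exact ⟨ε, hε, hmem ε hε le_rfl⟩

lemma rad_sol_closed {I : Finset (LF n)} {z : Euc n} (hz : z ∈ sol I) :
    IsClosed (rad z (sol I)) := by
  rw [rad_sol hz]
  have : {v : Euc n | ∀ h ∈ I, h.1 z = h.2 → h.1 v ≤ 0}
      = ⋂ h ∈ I, {v : Euc n | h.1 z = h.2 → h.1 v ≤ 0} := by
    ext v; simp
  rw [this]
  refine isClosed_biInter fun h _ => ?_
  by_cases heq : h.1 z = h.2
  · have : {v : Euc n | h.1 z = h.2 → h.1 v ≤ 0} = h.1 ⁻¹' Set.Iic 0 := by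
      ext v; simp [heq]
    rw [this]
    exact IsClosed.preimage h.1.continuous_of_finiteDimensional isClosed_Iic
  · have : {v : Euc n | h.1 z = h.2 → h.1 v ≤ 0} = Set.univ := by
      ext v; simp [heq]
    rw [this]; exact isClosed_univ

lemma rad_poly_closed {P : Set (Euc n)} (hP : IsPolyhedron P) {z : Euc n} (hz : z ∈ P) :
    IsClosed (rad z P) := by
  obtain ⟨I, rfl⟩ := isPolyhedron_sol hP; exact rad_sol_closed hz

lemma rad_poly_convex {P : Set (Euc n)} (hP : IsPolyhedron P) {z : Euc n} (hz : z ∈ P) :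
    Convex ℝ (rad z P) := by
  obtain ⟨I, rfl⟩ := isPolyhedron_sol hP
  rw [rad_sol hz]
  intro x hx y hy a b ha hb hab h hh heq
  have h1 := hx h hh heq
  have h2 := hy h hh heq
  show h.1 (a • x + b • y) ≤ 0
  have : h.1 (a • x + b • y) = a * h.1 x + b * h.1 y := by
    simp [map_add, map_smul, smul_eq_mul]
  nlinarith

lemma rad_neg_smul {P : Set (Euc n)} (hP : IsPolyhedron P) {z v : Euc n} (hz : z ∈ P)
    (hv : v ∈ rad z P) {t : ℝ} (ht : 0 ≤ t) : t • v ∈ rad z P := by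
  obtain ⟨I, rfl⟩ := isPolyhedron_sol hP
  rw [rad_sol hz] at *
  intro h hh heq
  have := hv h hh heq
  have hval : h.1 (t • v) = t * h.1 v := by simp [map_smul, smul_eq_mul]
  nlinarith

/-- Radial cone of a nonempty face, given both `v` and `-v` are radial in `P`. -/
lemma face_rad {P G : Set (Euc n)} (hF : IsFace P G) {z v : Euc n} (hz : z ∈ G)
    (hv : v ∈ rad z P) (hv' : -v ∈ rad z P) : v ∈ rad z G := by
  rcases hF with rfl | rfl | ⟨f, c, _, hle, rfl⟩
  · exact hv
  · exact absurd hz (Set.notMem_empty z)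
  · obtain ⟨hzP, hzf⟩ := hz
    have hfz : f z = c := hzf
    have hfv : f v = 0 := by
      obtain ⟨ε, hε, hm⟩ := hv
      obtain ⟨ε', hε', hm'⟩ := hv'
      have h1 : f (z + ε • v) ≤ c := hle _ hm
      have h2 : f (z + ε' • (-v)) ≤ c := hle _ hm'
      have e1 : f (z + ε • v) = f z + ε * f v := by simp [map_add, map_smul, smul_eq_mul]
      have e2 : f (z + ε' • (-v)) = f z - ε' * f v := by
        simp [map_add, map_smul, smul_eq_mul]; ring
      rw [e1, hfz] at h1
      rw [e2, hfz] at h2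
      nlinarith
    obtain ⟨ε, hε, hm⟩ := hv
    refine ⟨ε, hε, hm, ?_⟩
    show f (z + ε • v) = c
    have : f (z + ε • v) = f z + ε * f v := by simp [map_add, map_smul, smul_eq_mul]
    rw [this, hfz, hfv]; ring

lemma isFace_subset {P F : Set (Euc n)} (h : IsFace P F) : F ⊆ P := by
  rcases h with rfl | rfl | ⟨f, c, _, _, rfl⟩
  · exact Set.Subset.rfl
  · exact Set.empty_subset _
  · exact Set.inter_subset_left


/-! #### Relative interior points -/

/-- `x` is a `V`-interior point of `S`. -/
def vint (V : Submodule ℝ (Euc n)) (S : Set (Euc n)) : Set (Euc n) :=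
  {x | x ∈ S ∧ ∃ ε : ℝ, 0 < ε ∧ ∀ w ∈ V, ‖w‖ < ε → x + w ∈ S}

lemma vint_subset {V : Submodule ℝ (Euc n)} {S : Set (Euc n)} : vint V S ⊆ S :=
  fun _ h => h.1

lemma vint_nonempty {S : Set (Euc n)} (hS : Convex ℝ S) (hne : S.Nonempty) :
    (vint (vectorSpan ℝ S) S).Nonempty := by
  obtain ⟨x, hx⟩ := hne.intrinsicInterior hS
  obtain ⟨y, hy, rfl⟩ := hx
  refine ⟨(y : Euc n), ?_, ?_⟩
  · have := interior_subset hy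
    exact this
  · obtain ⟨ε, hε, hball⟩ := Metric.mem_nhds_iff.1 (mem_interior_iff_mem_nhds.1 hy)
    refine ⟨ε, hε, fun w hw hwε => ?_⟩
    have hmem : (y : Euc n) + w ∈ affineSpan ℝ S := by
      have h1 : w ∈ (affineSpan ℝ S).direction := by
        rw [direction_affineSpan]; exact hw
      have := AffineSubspace.vadd_mem_of_mem_direction h1 y.2
      simpa [vadd_eq_add, add_comm] using this
    set y' : affineSpan ℝ S := ⟨(y : Euc n) + w, hmem⟩ with hy'
    have hdist : dist y' y < ε := by
      rw [Subtype.dist_eq]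
      simp only [hy']
      rw [dist_eq_norm]
      simpa using hwε
    have := hball hdist
    exact this

lemma vint_shrink {V : Submodule ℝ (Euc n)} {S : Set (Euc n)} {x w : Euc n}
    (hx : x ∈ vint V S) (hw : w ∈ V) {ε : ℝ}
    (hballε : 0 < ε ∧ ∀ w' ∈ V, ‖w'‖ < ε → x + w' ∈ S) (hwε : ‖w‖ < ε) :
    x + w ∈ vint V S := by
  obtain ⟨hε, hball⟩ := hballε
  refine ⟨hball w hw hwε, ε - ‖w‖, by linarith, fun w' hw' hw'ε => ?_⟩
  have : x + w + w' = x + (w + w') := by abel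
  rw [this]
  exact hball _ (Submodule.add_mem V hw hw') (by
    calc ‖w + w'‖ ≤ ‖w‖ + ‖w'‖ := norm_add_le _ _
      _ < ε := by linarith)

/-- Moving from a `V`-interior point towards any point of a convex set stays
`V`-interior (for parameter < 1). -/
lemma vint_combo {V : Submodule ℝ (Euc n)} {S : Set (Euc n)} (hS : Convex ℝ S)
    {x y : Euc n} (hx : x ∈ vint V S) (hy : y ∈ S) {t : ℝ} (ht0 : 0 ≤ t) (ht1 : t < 1) :
    x + t • (y - x) ∈ vint V S := by
  obtain ⟨hxS, ε, hε, hball⟩ := hx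
  refine ⟨?_, (1 - t) * ε, by nlinarith, fun w hw hwε => ?_⟩
  · have := hS hxS hy (by linarith : (0:ℝ) ≤ 1 - t) ht0 (by ring)
    have heq : (1 - t) • x + t • y = x + t • (y - x) := by module
    rwa [heq] at this
  · have h1t : (1 - t) ≠ 0 := by intro h; rw [sub_eq_zero] at h; linarith
    have key : x + t • (y - x) + w = (1 - t) • (x + (1 - t)⁻¹ • w) + t • y := by
      rw [smul_add, smul_smul, mul_inv_cancel₀ h1t, one_smul]
      module
    rw [key]
    refine hS (hball _ (Submodule.smul_mem V _ hw) ?_) hy (by linarith) ht0 (by ring)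
    have h1tpos : (0:ℝ) < 1 - t := by linarith
    rw [norm_smul, Real.norm_eq_abs, abs_of_pos (by positivity)]
    rw [← mul_lt_mul_iff_right₀ h1tpos]
    calc (1-t) * ((1-t)⁻¹ * ‖w‖) = ‖w‖ := by field_simp
      _ < (1-t) * ε := hwε

/-! #### Genericity lemmas -/

/-- A finite family of submodules, none of which contains `V`, misses some vector of `V`. -/
lemma exists_avoid_subspaces {ι : Type} (s : Finset ι) (T : ι → Submodule ℝ (Euc n))
    (V : Submodule ℝ (Euc n)) (hT : ∀ j ∈ s, ¬ (V ≤ T j)) :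
    ∃ v ∈ V, ∀ j ∈ s, v ∉ T j := by
  classical
  induction s using Finset.induction_on with
  | empty => exact ⟨0, Submodule.zero_mem V, by simp⟩
  | @insert j s hj ih =>
    obtain ⟨v, hvV, hv⟩ := ih (fun i hi => hT i (Finset.mem_insert_of_mem hi))
    have hTj : ¬ (V ≤ T j) := hT j (Finset.mem_insert_self j s)
    rw [SetLike.le_def] at hTj
    push_neg at hTj
    obtain ⟨u, huV, huT⟩ := hTj
    by_cases hvj : v ∉ T j
    · exact ⟨v, hvV, fun i hi => by
        rcases Finset.mem_insert.1 hi with rfl | hi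
        exacts [hvj, hv i hi]⟩
    · push_neg at hvj
      -- bad parameter set is finite
      have hbad : ∀ i ∈ s, {t : ℝ | v + t • u ∈ T i}.Subsingleton := by
        intro i hi t htm t' ht'm
        by_contra hne
        have : (t - t') • u ∈ T i := by
          have := Submodule.sub_mem (T i) htm ht'm
          simpa [sub_smul] using this
        have hu : u ∈ T i := by
          have htt' : t - t' ≠ 0 := fun h => hne (by linarith [sub_eq_zero.1 h])
          have := Submodule.smul_mem (T i) (t - t')⁻¹ this
          rwa [smul_smul, inv_mul_cancel₀ htt', one_smul] at this
        have : v ∈ T i := by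
          have := Submodule.sub_mem (T i) htm (Submodule.smul_mem (T i) t hu)
          simpa using this
        exact hv i hi this
      have hfin : ({0} ∪ ⋃ i ∈ s, {t : ℝ | v + t • u ∈ T i}).Finite := by
        apply Set.Finite.union (Set.finite_singleton 0)
        exact Set.Finite.biUnion s.finite_toSet
          (fun i hi => Set.Subsingleton.finite (hbad i hi))
      obtain ⟨t, ht⟩ := Set.Infinite.nonempty (Set.Infinite.diff Set.infinite_univ hfin)
      have ht0 : t ≠ 0 := fun h => ht.2 (Or.inl (by simp [h]))
      have hts : ∀ i ∈ s, v + t • u ∉ T i := by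
        intro i hi hmem
        exact ht.2 (Or.inr (Set.mem_biUnion hi hmem))
      refine ⟨v + t • u, Submodule.add_mem V hvV (Submodule.smul_mem V t huV),
        fun i hi => ?_⟩
      rcases Finset.mem_insert.1 hi with rfl | hi
      · intro hmem
        have : t • u ∈ T i := by
          have := Submodule.sub_mem (T i) hmem hvj
          simpa using this
        have : u ∈ T i := by
          have h2 := Submodule.smul_mem (T i) t⁻¹ this
          rwa [smul_smul, inv_mul_cancel₀ ht0, one_smul] at h2
        exact huT this
      · exact hts i hi

/-- Main genericity lemma: near any point one can avoid finitely many sets of small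
affine dimension, moving within `V`. -/
lemma generic_avoid {ι : Type} (s : Finset ι) (E : ι → Set (Euc n))
    (V : Submodule ℝ (Euc n))
    (hE : ∀ j ∈ s, (E j).Nonempty →
      Module.finrank ℝ (vectorSpan ℝ (E j)) + 1 ≤ Module.finrank ℝ V)
    (x : Euc n) {ε : ℝ} (hε : 0 < ε) :
    ∃ w ∈ V, ‖w‖ < ε ∧ ∀ j ∈ s, x + w ∉ E j := by
  classical
  set s' : Finset ι := s.filter (fun j => (E j).Nonempty) with hs'
  by_cases hne : s'.Nonempty
  · have hT : ∀ j ∈ s', ¬ (V ≤ vectorSpan ℝ (E j)) := by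
      intro j hj hle
      have h1 := hE j (Finset.mem_filter.1 hj).1 (Finset.mem_filter.1 hj).2
      have h2 : Module.finrank ℝ V ≤ Module.finrank ℝ (vectorSpan ℝ (E j)) :=
        Submodule.finrank_mono hle
      omega
    obtain ⟨v, hvV, hv⟩ := exists_avoid_subspaces s' (fun j => vectorSpan ℝ (E j)) V hT
    have hv0 : v ≠ 0 := by
      obtain ⟨j, hj⟩ := hne
      intro h
      exact hv j hj (h ▸ Submodule.zero_mem _)
    have hbad : ∀ j ∈ s', {t : ℝ | x + t • v ∈ E j}.Subsingleton := by
      intro j hj t htm t' ht'm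
      by_contra hnet
      have hdiff : (x + t • v) -ᵥ (x + t' • v) ∈ vectorSpan ℝ (E j) :=
        vsub_mem_vectorSpan ℝ htm ht'm
      have heq : (x + t • v) -ᵥ (x + t' • v) = (t - t') • v := by
        simp [vsub_eq_sub, sub_smul]
      rw [heq] at hdiff
      have htt' : t - t' ≠ 0 := fun h => hnet (by linarith [sub_eq_zero.1 h])
      have := Submodule.smul_mem (vectorSpan ℝ (E j)) (t - t')⁻¹ hdiff
      rw [smul_smul, inv_mul_cancel₀ htt', one_smul] at this
      exact hv j hj this
    have hfin : (⋃ j ∈ s', {t : ℝ | x + t • v ∈ E j}).Finite :=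
      Set.Finite.biUnion s'.finite_toSet (fun j hj => (hbad j hj).finite)
    have hv0' : (0:ℝ) < ‖v‖ := norm_pos_iff.2 hv0
    have hIoo : (Set.Ioo (0:ℝ) (ε / ‖v‖)).Infinite := Set.Ioo_infinite (by positivity)
    obtain ⟨t, ht⟩ := (hIoo.diff hfin).nonempty
    refine ⟨t • v, Submodule.smul_mem V t hvV, ?_, ?_⟩
    · rw [norm_smul, Real.norm_eq_abs, abs_of_pos ht.1.1]
      calc t * ‖v‖ < (ε / ‖v‖) * ‖v‖ := by
            exact mul_lt_mul_of_pos_right ht.1.2 hv0'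
        _ = ε := by field_simp
    · intro j hj hmem
      by_cases hjne : (E j).Nonempty
      · have hj' : j ∈ s' := Finset.mem_filter.2 ⟨hj, hjne⟩
        exact ht.2 (Set.mem_biUnion hj' hmem)
      · exact hjne ⟨_, hmem⟩
  · refine ⟨0, Submodule.zero_mem V, by simpa using hε, fun j hj hmem => ?_⟩
    exact hne ⟨j, Finset.mem_filter.2 ⟨hj, ⟨_, hmem⟩⟩⟩


/-! #### Face theory via tight constraint sets -/

def eqs (J : Finset (LF n)) : Set (Euc n) := {x | ∀ h ∈ J, h.1 x = h.2}

lemma eqs_empty : eqs (∅ : Finset (LF n)) = Set.univ := by ext x; simp [eqs]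

lemma eqs_union (J K : Finset (LF n)) : eqs (J ∪ K) = eqs J ∩ eqs K := by
  ext x; simp only [eqs, Set.mem_inter_iff, Set.mem_setOf_eq, Finset.mem_union]
  constructor
  · intro h; exact ⟨fun h' hh' => h h' (Or.inl hh'), fun h' hh' => h h' (Or.inr hh')⟩
  · rintro ⟨h1, h2⟩ h' hh'; rcases hh' with hh' | hh'; exacts [h1 h' hh', h2 h' hh']

lemma isFace_self (P : Set (Euc n)) : IsFace P P := Or.inl rfl

lemma isFace_empty (P : Set (Euc n)) : IsFace P ∅ := Or.inr (Or.inl rfl)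

/-- Every tight set is a face. -/
lemma isFace_tight {P : Set (Euc n)} (hPne : P.Nonempty) {I : Finset (LF n)}
    (hPI : P = sol I) {J : Finset (LF n)} (hJ : J ⊆ I) : IsFace P (P ∩ eqs J) := by
  classical
  set f : Euc n →ₗ[ℝ] ℝ := ∑ h ∈ J, h.1 with hf
  set c : ℝ := ∑ h ∈ J, h.2 with hc
  have hfx : ∀ x, f x = ∑ h ∈ J, h.1 x := fun x => by
    rw [hf]; simp [LinearMap.sum_apply]
  have hPmem : ∀ x ∈ P, ∀ h ∈ J, h.1 x ≤ h.2 := by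
    intro x hx h hh
    have : x ∈ sol I := hPI ▸ hx
    exact this h (hJ hh)
  have hle : ∀ x ∈ P, f x ≤ c := by
    intro x hx; rw [hfx]
    exact Finset.sum_le_sum (hPmem x hx)
  have hiff : ∀ x ∈ P, (f x = c ↔ x ∈ eqs J) := by
    intro x hx
    rw [hfx, hc, Finset.sum_eq_sum_iff_of_le (hPmem x hx)]
    exact Iff.rfl
  by_cases hf0 : f = 0
  · obtain ⟨x₀, hx₀⟩ := hPne
    have hfzero : ∀ x, f x = 0 := fun x => by rw [hf0]; rfl
    have hc0 : 0 ≤ c := by have := hle x₀ hx₀; rwa [hfzero] at this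
    rcases eq_or_lt_of_le hc0 with hceq | hclt
    · left
      apply Set.Subset.antisymm Set.inter_subset_left
      intro x hx
      exact ⟨hx, (hiff x hx).1 (by rw [hfzero, hceq])⟩
    · right; left
      rw [Set.eq_empty_iff_forall_notMem]
      rintro x ⟨hxP, hxe⟩
      have := (hiff x hxP).2 hxe
      rw [hfzero] at this
      linarith
  · right; right
    refine ⟨f, c, hf0, hle, ?_⟩
    ext x
    simp only [Set.mem_inter_iff, Set.mem_setOf_eq]
    constructor
    · rintro ⟨hxP, hxe⟩; exact ⟨hxP, (hiff x hxP).2 hxe⟩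
    · rintro ⟨hxP, hxe⟩; exact ⟨hxP, (hiff x hxP).1 hxe⟩

/-- Every nonempty face is a tight set. -/
lemma face_eq_tight {P F : Set (Euc n)} {I : Finset (LF n)} (hPI : P = sol I)
    (hF : IsFace P F) (hne : F.Nonempty) : ∃ J, J ⊆ I ∧ F = P ∩ eqs J := by
  classical
  rcases hF with rfl | rfl | ⟨f, c, hf0, hle, rfl⟩
  · exact ⟨∅, Finset.empty_subset _, by rw [eqs_empty, Set.inter_univ]⟩
  · exact absurd hne (by simp)
  · set J : Finset (LF n) :=
      I.filter (fun h => ∀ y ∈ P ∩ {x | f x = c}, h.1 y = h.2) with hJdef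
    refine ⟨J, Finset.filter_subset _ _, ?_⟩
    obtain ⟨z₀, hz₀⟩ := hne
    have hPconv : Convex ℝ P := by rw [hPI]; exact convex_sol I
    have hFconv : Convex ℝ (P ∩ {x | f x = c}) := by
      apply hPconv.inter
      have : {x : Euc n | f x = c} = f ⁻¹' {c} := rfl
      rw [this]
      exact (convex_singleton c).linear_preimage f
    -- a point of F where all non-tight constraints are strict
    have hzex : ∀ s : Finset (LF n), s ⊆ I \ J →
        ∃ z ∈ P ∩ {x | f x = c}, ∀ h ∈ s, h.1 z < h.2 := by
      intro s hs
      induction s using Finset.induction_on with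
      | empty => exact ⟨z₀, hz₀, by simp⟩
      | @insert h s hh ih =>
        obtain ⟨z, hzF, hz⟩ := ih ((Finset.insert_subset_iff.1 hs).2)
        have hhIJ : h ∈ I \ J := (Finset.insert_subset_iff.1 hs).1
        have hhI : h ∈ I := (Finset.mem_sdiff.1 hhIJ).1
        have hhJ : h ∉ J := (Finset.mem_sdiff.1 hhIJ).2
        have : ∃ y ∈ P ∩ {x | f x = c}, h.1 y ≠ h.2 := by
          by_contra hcon
          push_neg at hcon
          exact hhJ (Finset.mem_filter.2 ⟨hhI, hcon⟩)
        obtain ⟨y, hyF, hy⟩ := this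
        have hylt : h.1 y < h.2 := by
          have : y ∈ sol I := hPI ▸ hyF.1
          exact lt_of_le_of_ne (this h hhI) hy
        set z' : Euc n := (1/2 : ℝ) • z + (1/2 : ℝ) • y with hz'
        have hz'F : z' ∈ P ∩ {x | f x = c} :=
          hFconv hzF hyF (by norm_num) (by norm_num) (by norm_num)
        refine ⟨z', hz'F, fun h' hh' => ?_⟩
        have happ : h'.1 z' = (1/2 : ℝ) * h'.1 z + (1/2 : ℝ) * h'.1 y := by
          rw [hz']; simp [map_add, map_smul, smul_eq_mul]
        rcases Finset.mem_insert.1 hh' with rfl | hh'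
        · have h1 : h'.1 z ≤ h'.2 := (hPI ▸ hzF.1) h' hhI
          rw [happ]; linarith
        · have h1 : h'.1 z < h'.2 := hz h' hh'
          have h2 : h'.1 y ≤ h'.2 := by
            have hmem : h' ∈ I := (Finset.mem_sdiff.1 ((Finset.insert_subset_iff.1 hs).2 hh')).1
            exact (hPI ▸ hyF.1) h' hmem
          rw [happ]; linarith
    obtain ⟨z, hzF, hzstrict⟩ := hzex (I \ J) Finset.Subset.rfl
    apply Set.Subset.antisymm
    · rintro y ⟨hyP, hyf⟩
      refine ⟨hyP, fun h hh => ?_⟩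
      exact (Finset.mem_filter.1 hh).2 y ⟨hyP, hyf⟩
    · rintro x ⟨hxP, hxe⟩
      refine ⟨hxP, ?_⟩
      -- perturb from z away from x
      have hpert : ∀ h ∈ I, h.1 z < h.2 ∨ (h.1 z ≤ h.2 ∧ h.1 (z - x) ≤ 0) := by
        intro h hh
        by_cases hhJ : h ∈ J
        · right
          have he1 : h.1 z = h.2 := (Finset.mem_filter.1 hhJ).2 z hzF
          have he2 : h.1 x = h.2 := hxe h hhJ
          refine ⟨he1.le, ?_⟩
          rw [map_sub, he1, he2]; simp
        · left; exact hzstrict h (Finset.mem_sdiff.2 ⟨hh, hhJ⟩)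
      obtain ⟨ε, hε, hmem⟩ := sol_perturb hpert
      have hw : z + ε • (z - x) ∈ P := hPI ▸ (hPI ▸ hmem ε hε le_rfl)
      have hfw : f (z + ε • (z - x)) ≤ c := hle _ hw
      have hfz : f z = c := hzF.2
      have hexp : f (z + ε • (z - x)) = f z + ε * (f z - f x) := by
        simp only [map_add, map_smul, map_sub, smul_eq_mul]
      rw [hexp, hfz] at hfw
      have hxc : f x ≤ c := hle x hxP
      show f x = c
      nlinarith

def flipLF (h : LF n) : LF n := (-h.1, -h.2)

lemma flip_eq_iff (h : LF n) (x : Euc n) :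
    ((flipLF h).1 x = (flipLF h).2) ↔ (h.1 x = h.2) := by
  show (-h.1) x = -h.2 ↔ h.1 x = h.2
  rw [LinearMap.neg_apply]
  exact neg_inj

/-- A tight face, as a solution set. -/
lemma tight_as_sol {P : Set (Euc n)} {I : Finset (LF n)} (hPI : P = sol I)
    {J : Finset (LF n)} (hJ : J ⊆ I) :
    P ∩ eqs J = sol (I ∪ J.image flipLF) := by
  classical
  ext x
  simp only [sol, Set.mem_inter_iff, Set.mem_setOf_eq, Finset.mem_union, eqs, hPI]
  constructor
  · rintro ⟨hx, hxe⟩ h hh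
    rcases hh with hh | hh
    · exact hx h hh
    · obtain ⟨h₀, hh₀, rfl⟩ := Finset.mem_image.1 hh
      have := hxe h₀ hh₀
      show (-h₀.1) x ≤ -h₀.2
      rw [LinearMap.neg_apply]
      linarith
  · intro hx
    refine ⟨fun h hh => hx h (Or.inl hh), fun h hh => ?_⟩
    have h1 := hx h (Or.inl (hJ hh))
    have h2 := hx (flipLF h) (Or.inr (Finset.mem_image_of_mem _ hh))
    simp only [flipLF, LinearMap.neg_apply] at h2
    linarith

lemma isPolyhedron_face {P F : Set (Euc n)} (hP : IsPolyhedron P) (hF : IsFace P F)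
    (hne : F.Nonempty) : IsPolyhedron F := by
  obtain ⟨I, hPI⟩ := isPolyhedron_sol hP
  obtain ⟨J, hJI, hFJ⟩ := face_eq_tight hPI hF hne
  exact ⟨hne, I ∪ J.image flipLF, by rw [hFJ, tight_as_sol hPI hJI]; rfl⟩

lemma faces_finite {P : Set (Euc n)} (hP : IsPolyhedron P) :
    {F : Set (Euc n) | IsFace P F ∧ F.Nonempty}.Finite := by
  obtain ⟨I, hPI⟩ := isPolyhedron_sol hP
  apply Set.Finite.subset ((I.powerset.finite_toSet).image (fun J => P ∩ eqs J))
  rintro F ⟨hF, hne⟩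
  obtain ⟨J, hJI, rfl⟩ := face_eq_tight hPI hF hne
  exact ⟨J, by simpa using hJI, rfl⟩

lemma isFace_trans {P F G : Set (Euc n)} (hP : IsPolyhedron P)
    (hF : IsFace P F) (hG : IsFace F G) : IsFace P G := by
  classical
  obtain ⟨I, hPI⟩ := isPolyhedron_sol hP
  by_cases hGne : G.Nonempty
  swap
  · rw [Set.not_nonempty_iff_eq_empty] at hGne; rw [hGne]; exact isFace_empty P
  by_cases hFne : F.Nonempty
  swap
  · rw [Set.not_nonempty_iff_eq_empty] at hFne
    have hsub := isFace_subset hG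
    rw [hFne, Set.subset_empty_iff] at hsub
    rw [hsub]; exact isFace_empty P
  obtain ⟨J, hJI, hFJ⟩ := face_eq_tight hPI hF hFne
  have hFsol : F = sol (I ∪ J.image flipLF) := hFJ.trans (tight_as_sol hPI hJI)
  obtain ⟨K, hKI', hGK⟩ := face_eq_tight hFsol hG hGne
  set K' : Finset (LF n) := J ∪ K.filter (· ∈ I) ∪ (K.filter (· ∉ I)).image flipLF
    with hK'def
  have hK'I : K' ⊆ I := by
    intro h hh
    rcases Finset.mem_union.1 hh with hh | hh
    · rcases Finset.mem_union.1 hh with hh | hh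
      · exact hJI hh
      · exact (Finset.mem_filter.1 hh).2
    · obtain ⟨h₀, hh₀, rfl⟩ := Finset.mem_image.1 hh
      have h1 : h₀ ∈ K := (Finset.mem_filter.1 hh₀).1
      have h2 : h₀ ∉ I := (Finset.mem_filter.1 hh₀).2
      have h3 : h₀ ∈ I ∪ J.image flipLF := hKI' h1
      rcases Finset.mem_union.1 h3 with h4 | h4
      · exact absurd h4 h2
      · obtain ⟨h₁, hh₁, rfl⟩ := Finset.mem_image.1 h4
        have : flipLF (flipLF h₁) = h₁ := by simp [flipLF]
        rw [this]
        exact hJI hh₁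
  have hGK' : G = P ∩ eqs K' := by
    rw [hGK, hFJ]
    have heqs : eqs J ∩ eqs K = eqs K' := by
      ext x
      simp only [eqs, Set.mem_inter_iff, Set.mem_setOf_eq]
      constructor
      · rintro ⟨h1, h2⟩ h hh
        rw [hK'def] at hh
        rcases Finset.mem_union.1 hh with hh | hh
        · rcases Finset.mem_union.1 hh with hh | hh
          · exact h1 h hh
          · exact h2 h (Finset.mem_filter.1 hh).1
        · obtain ⟨h₀, hh₀, rfl⟩ := Finset.mem_image.1 hh
          exact (flip_eq_iff h₀ x).2 (h2 h₀ (Finset.mem_filter.1 hh₀).1)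
      · intro hx
        constructor
        · intro h hh
          have hmem : h ∈ K' := by
            rw [hK'def]
            exact Finset.mem_union_left _ (Finset.mem_union_left _ hh)
          exact hx h hmem
        · intro h hh
          by_cases hI : h ∈ I
          · have hmem : h ∈ K' := by
              rw [hK'def]
              exact Finset.mem_union_left _
                (Finset.mem_union_right _ (Finset.mem_filter.2 ⟨hh, hI⟩))
            exact hx h hmem
          · have hmem : flipLF h ∈ K' := by
              rw [hK'def]
              exact Finset.mem_union_right _
                (Finset.mem_image_of_mem _ (Finset.mem_filter.2 ⟨hh, hI⟩))
            exact (flip_eq_iff h x).1 (hx _ hmem)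
    rw [← heqs, Set.inter_assoc]
  rw [hGK']
  exact isFace_tight hP.1 hPI hK'I

lemma isFace_inter {P F G : Set (Euc n)} (hP : IsPolyhedron P)
    (hF : IsFace P F) (hG : IsFace P G) : IsFace P (F ∩ G) := by
  classical
  obtain ⟨I, hPI⟩ := isPolyhedron_sol hP
  by_cases hFne : F.Nonempty
  swap
  · rw [Set.not_nonempty_iff_eq_empty] at hFne
    rw [hFne, Set.empty_inter]; exact isFace_empty P
  by_cases hGne : G.Nonempty
  swap
  · rw [Set.not_nonempty_iff_eq_empty] at hGne
    rw [hGne, Set.inter_empty]; exact isFace_empty P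
  obtain ⟨J, hJI, hFJ⟩ := face_eq_tight hPI hF hFne
  obtain ⟨K, hKI, hGK⟩ := face_eq_tight hPI hG hGne
  have : F ∩ G = P ∩ eqs (J ∪ K) := by
    rw [hFJ, hGK, eqs_union]
    ext x
    simp only [Set.mem_inter_iff, Set.mem_setOf_eq]
    tauto
  rw [this]
  exact isFace_tight hP.1 hPI (Finset.union_subset hJI hKI)

/-- A face of `P` contained in a face `F` is a face of `F`. -/
lemma isFace_of_subset_face {P F G : Set (Euc n)} (hP : IsPolyhedron P)
    (hF : IsFace P F) (hG : IsFace P G) (hsub : G ⊆ F) : IsFace F G := by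
  classical
  obtain ⟨I, hPI⟩ := isPolyhedron_sol hP
  by_cases hGne : G.Nonempty
  swap
  · rw [Set.not_nonempty_iff_eq_empty] at hGne; rw [hGne]; exact isFace_empty F
  have hFne : F.Nonempty := hGne.mono hsub
  obtain ⟨J, hJI, hFJ⟩ := face_eq_tight hPI hF hFne
  obtain ⟨K, hKI, hGK⟩ := face_eq_tight hPI hG hGne
  have hFsol : F = sol (I ∪ J.image flipLF) := hFJ.trans (tight_as_sol hPI hJI)
  have hGF : G = F ∩ eqs K := by
    apply Set.Subset.antisymm
    · refine Set.subset_inter hsub ?_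
      rw [hGK]; exact Set.inter_subset_right
    · rintro x ⟨hxF, hxe⟩
      rw [hGK]
      exact ⟨(hFJ ▸ hxF).1, hxe⟩
  rw [hGF]
  exact isFace_tight hFne hFsol (hKI.trans Finset.subset_union_left)


/-! #### Dimension and covering lemmas -/

lemma polyDim_eq_finrank {S : Set (Euc n)} (hS : S.Nonempty) :
    polyDim S = (Module.finrank ℝ (vectorSpan ℝ S) : ℤ) := by
  rw [polyDim, if_neg (Set.nonempty_iff_ne_empty.1 hS)]

lemma vectorSpan_le_span (S : Set (Euc n)) :
    vectorSpan ℝ S ≤ Submodule.span ℝ S := by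
  rw [vectorSpan_def]
  apply Submodule.span_le.2
  intro w hw
  obtain ⟨a, ha, b, hb, rfl⟩ := Set.mem_sub.1 hw
  exact Submodule.sub_mem _ (Submodule.subset_span ha) (Submodule.subset_span hb)

lemma vectorSpan_eq_span_of_zero_mem {S : Set (Euc n)} (h : (0 : Euc n) ∈ S) :
    vectorSpan ℝ S = Submodule.span ℝ S := by
  apply le_antisymm (vectorSpan_le_span S)
  rw [vectorSpan_eq_span_vsub_set_right ℝ h]
  have heq : (fun x => x -ᵥ (0 : Euc n)) '' S = S := by
    ext x; simp [vsub_eq_sub]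
  rw [heq]

lemma vectorSpan_le_of_subset_submodule {S : Set (Euc n)} {V : Submodule ℝ (Euc n)}
    (h : S ⊆ (V : Set (Euc n))) : vectorSpan ℝ S ≤ V := by
  rw [vectorSpan_def]
  apply Submodule.span_le.2
  intro w hw
  obtain ⟨a, ha, b, hb, rfl⟩ := Set.mem_sub.1 hw
  exact Submodule.sub_mem _ (h ha) (h hb)

/-- If all constraints are strict at `z`, a full ball around `z` stays in the solution set. -/
lemma sol_ball {I : Finset (LF n)} {z : Euc n} (hz : ∀ h ∈ I, h.1 z < h.2) :
    ∃ ε : ℝ, 0 < ε ∧ ∀ w : Euc n, ‖w‖ < ε → z + w ∈ sol I := by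
  classical
  induction I using Finset.induction_on with
  | empty => exact ⟨1, one_pos, fun w _ h hh => absurd hh (Finset.notMem_empty h)⟩
  | @insert h s hh ih =>
    obtain ⟨ε₁, hε₁, hball₁⟩ := ih (fun h' hh' => hz h' (Finset.mem_insert_of_mem hh'))
    have hopen : IsOpen (h.1 ⁻¹' Set.Iio h.2) :=
      IsOpen.preimage h.1.continuous_of_finiteDimensional isOpen_Iio
    have hzmem : z ∈ h.1 ⁻¹' Set.Iio h.2 := hz h (Finset.mem_insert_self h s)
    obtain ⟨ε₂, hε₂, hball₂⟩ := Metric.isOpen_iff.1 hopen z hzmem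
    refine ⟨min ε₁ ε₂, lt_min hε₁ hε₂, fun w hw h' hh' => ?_⟩
    rcases Finset.mem_insert.1 hh' with rfl | hh'
    · have : z + w ∈ Metric.ball z ε₂ := by
        rw [Metric.mem_ball, dist_eq_norm]
        simpa using lt_of_lt_of_le hw (min_le_right _ _)
      exact le_of_lt (hball₂ this)
    · exact hball₁ w (lt_of_lt_of_le hw (min_le_left _ _)) h' hh'

/-- Covering lemma: a direction entering the support at `z` enters some member
containing `z`. -/
lemma rad_cover {M : Set (Set (Euc n))} (hfin : M.Finite) (hM : ∀ P ∈ M, IsPolyhedron P) {z u : Euc n}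
    {ε : ℝ} (hε : 0 < ε) (hmem : ∀ t : ℝ, 0 < t → t ≤ ε → z + t • u ∈ ⋃₀ M) :
    ∃ R ∈ M, z ∈ R ∧ u ∈ rad z R := by
  classical
  have hchoice : ∀ k : ℕ, ∃ R ∈ M, z + (ε / (k + 1)) • u ∈ R := by
    intro k
    have h1 : (0:ℝ) < ε / (k+1) := by positivity
    have h2 : ε / (k+1) ≤ ε := by
      rw [div_le_iff₀ (by positivity)]
      nlinarith [Nat.cast_nonneg (α := ℝ) k]
    obtain ⟨R, hR, hmemR⟩ := hmem _ h1 h2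
    exact ⟨R, hR, hmemR⟩
  choose R hRM hRmem using hchoice
  haveI : Finite ↥(hfin.toFinset : Finset (Set (Euc n))) := inferInstance
  set g : ℕ → ↥(hfin.toFinset : Finset (Set (Euc n))) :=
    fun k => ⟨R k, hfin.mem_toFinset.2 (hRM k)⟩ with hg
  obtain ⟨R₀, hR₀inf⟩ := Finite.exists_infinite_fiber g
  have hsub : (g ⁻¹' {R₀} : Set ℕ) ⊆ {k : ℕ | R k = (R₀ : Set (Euc n))} := by
    intro k hk
    have hgk : g k = R₀ := hk
    simpa [hg] using congrArg Subtype.val hgk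
  have hinf : {k : ℕ | R k = (R₀ : Set (Euc n))}.Infinite :=
    (Set.infinite_coe_iff.1 hR₀inf).mono hsub
  have hR₀M : (R₀ : Set (Euc n)) ∈ M := hfin.mem_toFinset.1 R₀.2
  have hzR₀ : z ∈ (R₀ : Set (Euc n)) := by
    by_contra hz
    have hcl : IsClosed (R₀ : Set (Euc n)) := poly_closed (hM _ hR₀M)
    have : (R₀ : Set (Euc n))ᶜ ∈ nhds z := hcl.isOpen_compl.mem_nhds hz
    obtain ⟨δ, hδ, hball⟩ := Metric.mem_nhds_iff.1 this
    obtain ⟨k, hk, hklarge⟩ := hinf.exists_gt ⌈ε * (‖u‖ + 1) / δ⌉₊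
    have hkmem : z + (ε / (k+1)) • u ∈ (R₀ : Set (Euc n)) := by
      rw [← hk]; exact hRmem k
    have hdist : dist (z + (ε / (k+1)) • u) z < δ := by
      rw [dist_eq_norm]
      have h1 : ‖z + (ε / (k+1)) • u - z‖ = (ε / (k+1)) * ‖u‖ := by
        rw [add_sub_cancel_left, norm_smul, Real.norm_eq_abs, abs_of_pos (by positivity)]
      rw [h1]
      have h2 : (⌈ε * (‖u‖ + 1) / δ⌉₊ : ℝ) < (k : ℝ) + 1 := by
        have := Nat.lt_iff_add_one_le.2 hklarge
        exact_mod_cast by exact_mod_cast Nat.lt_of_lt_of_le hklarge (Nat.le_succ k)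
      have h3 : ε * (‖u‖ + 1) / δ ≤ (⌈ε * (‖u‖ + 1) / δ⌉₊ : ℝ) := Nat.le_ceil _
      have h4 : ε * (‖u‖ + 1) / δ < (k : ℝ) + 1 := lt_of_le_of_lt h3 h2
      have h5 : ε * (‖u‖ + 1) < ((k : ℝ) + 1) * δ := by
        rw [div_lt_iff₀ hδ] at h4; linarith
      have h6 : (0:ℝ) < (k:ℝ) + 1 := by positivity
      rw [div_mul_eq_mul_div, div_lt_iff₀ h6]
      nlinarith [norm_nonneg u]
    exact hball hdist hkmem
  obtain ⟨k, hk⟩ := hinf.nonempty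
  refine ⟨(R₀ : Set (Euc n)), hR₀M, hzR₀, ε / (k+1), by positivity, ?_⟩
  rw [← hk]; exact hRmem k


/-! #### Setting up the common affine hull -/

lemma hull_setup {M : Set (Set (Euc n))} {d : ℕ} (hfin : M.Finite) (hne : M.Nonempty)
    (hpoly : ∀ P ∈ M, IsPolyhedron P ∧ polyDim P = (d : ℤ))
    (hconv : Convex ℝ (⋃₀ M)) :
    (∀ P ∈ M, vectorSpan ℝ P = vectorSpan ℝ (⋃₀ M)) ∧
      Module.finrank ℝ (vectorSpan ℝ (⋃₀ M)) = d := by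
  classical
  obtain ⟨P₀, hP₀⟩ := hne
  have hUne : (⋃₀ M).Nonempty := ((hpoly P₀ hP₀).1.1).mono (Set.subset_sUnion_of_mem hP₀)
  have hPd : ∀ P ∈ M, Module.finrank ℝ (vectorSpan ℝ P) = d := by
    intro P hP
    have h1 := (hpoly P hP).2
    rw [polyDim_eq_finrank (hpoly P hP).1.1] at h1
    exact_mod_cast h1
  have hle : ∀ P ∈ M, vectorSpan ℝ P ≤ vectorSpan ℝ (⋃₀ M) :=
    fun P hP => vectorSpan_mono ℝ (Set.subset_sUnion_of_mem hP)
  have hDd : Module.finrank ℝ (vectorSpan ℝ (⋃₀ M)) ≤ d := by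
    by_contra hcon
    push_neg at hcon
    obtain ⟨z, hzU, ε, hε, hball⟩ := vint_nonempty hconv hUne
    obtain ⟨w, hwV, hwε, hwavoid⟩ := generic_avoid hfin.toFinset (fun P => P)
      (vectorSpan ℝ (⋃₀ M)) (fun P hP _ => by
        rw [hPd P (hfin.mem_toFinset.1 hP)]; omega) z hε
    obtain ⟨P, hP, hmem⟩ := hball w hwV hwε
    exact hwavoid P (hfin.mem_toFinset.2 hP) hmem
  have hdD : d ≤ Module.finrank ℝ (vectorSpan ℝ (⋃₀ M)) := by
    rw [← hPd P₀ hP₀]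
    exact Submodule.finrank_mono (hle P₀ hP₀)
  have hD : Module.finrank ℝ (vectorSpan ℝ (⋃₀ M)) = d := le_antisymm hDd hdD
  refine ⟨fun P hP => ?_, hD⟩
  apply Submodule.eq_of_le_of_finrank_le (hle P hP)
  rw [hD, hPd P hP]

/-! #### The walking lemma -/

/-- Key lemma: a doubly-radial direction (lineality direction) of the cone of `P` at a
point `z ∈ P ∩ Q` is radial for `Q` as well. -/
lemma walk_lemma {M : Set (Set (Euc n))} {d : ℕ} {V : Submodule ℝ (Euc n)}
    (hfin : M.Finite)
    (hpoly : ∀ P ∈ M, IsPolyhedron P)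
    (hconv : Convex ℝ (⋃₀ M))
    (hspan : ∀ P ∈ M, vectorSpan ℝ P = V)
    (hd : Module.finrank ℝ V = d)
    (hii : ∀ P ∈ M, ∀ Q ∈ M, (d : ℤ) - 1 ≤ polyDim (P ∩ Q) →
      IsFace P (P ∩ Q) ∧ IsFace Q (P ∩ Q))
    {P Q : Set (Euc n)} (hP : P ∈ M) (hQ : Q ∈ M) {z : Euc n}
    (hzP : z ∈ P) (hzQ : z ∈ Q) {v : Euc n}
    (hv : v ∈ rad z P) (hv' : -v ∈ rad z P) : v ∈ rad z Q := by
  classical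
  have hPpoly := hpoly P hP
  have hQpoly := hpoly Q hQ
  have hradsubV : ∀ R ∈ M, z ∈ R → rad z R ⊆ (V : Set (Euc n)) := by
    intro R hR hzR w hw
    have h1 : w ∈ Submodule.span ℝ (rad z R) := Submodule.subset_span hw
    rw [span_rad_eq hzR, hspan R hR] at h1
    exact h1
  have hvsC : ∀ R ∈ M, z ∈ R → vectorSpan ℝ (rad z R) = V := by
    intro R hR hzR
    rw [vectorSpan_eq_span_of_zero_mem (zero_mem_rad hzR), span_rad_eq hzR, hspan R hR]
  -- key transfer step using hypothesis (ii)
  have key : ∀ R ∈ M, ∀ R' ∈ M, z ∈ R → z ∈ R' →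
      v ∈ rad z R → -v ∈ rad z R →
      d ≤ Module.finrank ℝ (vectorSpan ℝ (R ∩ R')) + 1 →
      v ∈ rad z R' ∧ -v ∈ rad z R' := by
    intro R hR R' hR' hzR hzR' hvR hvR' hdim
    have hzRR' : z ∈ R ∩ R' := ⟨hzR, hzR'⟩
    have hRR'ne : (R ∩ R').Nonempty := ⟨z, hzRR'⟩
    have hpd : (d : ℤ) - 1 ≤ polyDim (R ∩ R') := by
      rw [polyDim_eq_finrank hRR'ne]
      push_cast
      omega
    have hface := ((hii R hR R' hR') hpd).1
    have h1 : v ∈ rad z (R ∩ R') := face_rad hface hzRR' hvR hvR'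
    have h2 : -v ∈ rad z (R ∩ R') := face_rad hface hzRR' hvR' (by rwa [neg_neg])
    exact ⟨rad_mono Set.inter_subset_right h1, rad_mono Set.inter_subset_right h2⟩
  set MF := hfin.toFinset with hMF
  set bcond : Set (Euc n) × Set (Euc n) → Prop := fun p =>
    p.1 ∈ M ∧ p.2 ∈ M ∧ z ∈ p.1 ∧ z ∈ p.2 ∧
      Module.finrank ℝ (vectorSpan ℝ (p.1 ∩ p.2)) + 2 ≤ d with hbcond
  set E : Set (Euc n) × Set (Euc n) → Set (Euc n) := fun p =>
    if bcond p then rad z p.1 ∩ rad z p.2 else ∅ with hE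
  have hEzero : ∀ p, (E p).Nonempty → bcond p ∧ E p = rad z p.1 ∩ rad z p.2 := by
    intro p hne
    by_cases hb : bcond p
    · exact ⟨hb, by rw [hE]; simp only [if_pos hb]⟩
    · rw [hE] at hne; simp only [if_neg hb] at hne; exact absurd hne (by simp)
  have hEdim2 : ∀ p, (E p).Nonempty →
      Module.finrank ℝ (vectorSpan ℝ (E p)) + 2 ≤ d := by
    intro p hne
    obtain ⟨⟨h1M, h2M, hz1, hz2, hdim⟩, hEeq⟩ := hEzero p hne
    have hconv1 := poly_convex (hpoly _ h1M)
    have hconv2 := poly_convex (hpoly _ h2M)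
    have hradeq : rad z p.1 ∩ rad z p.2 = rad z (p.1 ∩ p.2) :=
      (rad_inter hconv1 hconv2 hz1 hz2).symm
    have hle1 : vectorSpan ℝ (E p) ≤ vectorSpan ℝ (p.1 ∩ p.2) := by
      rw [hEeq, hradeq]
      calc vectorSpan ℝ (rad z (p.1 ∩ p.2)) ≤ Submodule.span ℝ (rad z (p.1 ∩ p.2)) :=
            vectorSpan_le_span _
        _ = vectorSpan ℝ (p.1 ∩ p.2) := span_rad_eq ⟨hz1, hz2⟩
    have := Submodule.finrank_mono hle1
    omega
  -- interior point of the cone of P avoiding the bad sets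
  have hCPconv := rad_poly_convex hPpoly hzP
  have hCPne : (rad z P).Nonempty := ⟨0, zero_mem_rad hzP⟩
  obtain ⟨x₀, hx₀⟩ := vint_nonempty hCPconv hCPne
  rw [hvsC P hP hzP] at hx₀
  obtain ⟨hx₀C, ε₀, hε₀, hball₀⟩ := hx₀
  obtain ⟨w₀, hw₀V, hw₀ε, hw₀avoid⟩ := generic_avoid (MF ×ˢ MF) E V
    (fun p _ hpne => by have h2 := hEdim2 p hpne; rw [hd]; omega) x₀ hε₀
  set v₀ : Euc n := x₀ + w₀ with hv₀def
  have hv₀vint : v₀ ∈ vint V (rad z P) :=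
    vint_shrink ⟨hx₀C, ε₀, hε₀, hball₀⟩ hw₀V ⟨hε₀, hball₀⟩ hw₀ε
  have hv₀C : v₀ ∈ rad z P := hv₀vint.1
  -- the cone-translates of the bad sets seen from v₀
  set D : Set (Euc n) × Set (Euc n) → Set (Euc n) := fun p =>
    {y | ∃ b ∈ E p, ∃ μ : ℝ, 1 ≤ μ ∧ y = v₀ + μ • (b - v₀)} with hD
  have hDdim : ∀ p, (D p).Nonempty →
      Module.finrank ℝ (vectorSpan ℝ (D p)) + 1 ≤ Module.finrank ℝ V := by
    intro p hne
    have hEne : (E p).Nonempty := by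
      obtain ⟨y, b, hb, _⟩ := hne; exact ⟨b, hb⟩
    obtain ⟨⟨h1M, h2M, hz1, hz2, _⟩, hEeq⟩ := hEzero p hEne
    have hzeroE : (0 : Euc n) ∈ E p := by
      rw [hEeq]; exact ⟨zero_mem_rad hz1, zero_mem_rad hz2⟩
    have hWle : vectorSpan ℝ (D p) ≤
        Submodule.span ℝ (E p) ⊔ Submodule.span ℝ {v₀} := by
      rw [vectorSpan_def]
      apply Submodule.span_le.2
      intro w hw
      obtain ⟨a, ha, b, hb, rfl⟩ := Set.mem_sub.1 hw
      obtain ⟨ba, hba, μa, _, rfl⟩ := ha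
      obtain ⟨bb, hbb, μb, _, rfl⟩ := hb
      show (v₀ + μa • (ba - v₀)) - (v₀ + μb • (bb - v₀)) ∈ _
      have heq : (v₀ + μa • (ba - v₀)) - (v₀ + μb • (bb - v₀))
          = (μa • ba - μb • bb) - (μa - μb) • v₀ := by module
      rw [heq]
      apply Submodule.sub_mem
      · exact Submodule.mem_sup_left (Submodule.sub_mem _
          (Submodule.smul_mem _ _ (Submodule.subset_span hba))
          (Submodule.smul_mem _ _ (Submodule.subset_span hbb)))
      · exact Submodule.mem_sup_right
          (Submodule.smul_mem _ _ (Submodule.mem_span_singleton_self v₀))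
    have hfr1 : Module.finrank ℝ (Submodule.span ℝ (E p)) + 2 ≤ d := by
      rw [← vectorSpan_eq_span_of_zero_mem hzeroE]
      exact hEdim2 p hEne
    have hfr2 : Module.finrank ℝ (Submodule.span ℝ ({v₀} : Set (Euc n))) ≤ 1 := by
      by_cases hv₀0 : v₀ = 0
      · rw [hv₀0]
        have hb : Submodule.span ℝ ({(0:Euc n)} : Set (Euc n)) = ⊥ :=
          Submodule.span_zero_singleton ℝ
        rw [hb, finrank_bot]
        norm_num
      · rw [finrank_span_singleton hv₀0]
    have hsup := Submodule.finrank_sup_add_finrank_inf_eq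
      (Submodule.span ℝ (E p)) (Submodule.span ℝ ({v₀} : Set (Euc n)))
    have hfr3 := Submodule.finrank_mono hWle
    rw [hd]
    omega
  -- interior point of the cone of Q avoiding the D sets
  have hCQconv := rad_poly_convex hQpoly hzQ
  have hCQne : (rad z Q).Nonempty := ⟨0, zero_mem_rad hzQ⟩
  obtain ⟨x₁, hx₁⟩ := vint_nonempty hCQconv hCQne
  rw [hvsC Q hQ hzQ] at hx₁
  obtain ⟨hx₁C, ε₁', hε₁', hball₁'⟩ := hx₁
  obtain ⟨w₁, hw₁V, hw₁ε, hw₁avoid⟩ := generic_avoid (MF ×ˢ MF) D V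
    (fun p _ hpne => hDdim p hpne) x₁ hε₁'
  set v₁ : Euc n := x₁ + w₁ with hv₁def
  have hv₁vint : v₁ ∈ vint V (rad z Q) :=
    vint_shrink ⟨hx₁C, ε₁', hε₁', hball₁'⟩ hw₁V ⟨hε₁', hball₁'⟩ hw₁ε
  have hv₁K : v₁ ∈ rad z Q := hv₁vint.1
  -- the segment
  set σ : ℝ → Euc n := fun t => v₀ + t • (v₁ - v₀) with hσ
  have hσcont : Continuous σ := by
    apply continuous_const.add
    exact continuous_id.smul continuous_const
  have havoid : ∀ t ∈ Set.Icc (0:ℝ) 1, ∀ p, σ t ∉ E p := by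
    rintro t ⟨ht0, ht1⟩ p hmem
    have hpMF : p ∈ MF ×ˢ MF := by
      obtain ⟨hb, _⟩ := hEzero p ⟨_, hmem⟩
      rw [Finset.mem_product]
      exact ⟨hfin.mem_toFinset.2 hb.1, hfin.mem_toFinset.2 hb.2.1⟩
    rcases eq_or_lt_of_le ht0 with rfl | htpos
    · apply hw₀avoid p hpMF
      have : σ 0 = v₀ := by rw [hσ]; simp
      rwa [this] at hmem
    · apply hw₁avoid p hpMF
      have hv₁eq : v₁ = v₀ + (1/t) • (σ t - v₀) := by
        rw [hσ]
        simp only [add_sub_cancel_left, smul_smul]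
        rw [one_div, inv_mul_cancel₀ (ne_of_gt htpos), one_smul]
        abel
      have h1t : (1:ℝ) ≤ 1/t := (le_div_iff₀ htpos).2 (by rw [one_mul]; exact ht1)
      show v₁ ∈ D p
      exact ⟨σ t, hmem, 1/t, h1t, hv₁eq⟩
  -- covering of the segment by cones of members containing z
  have hcover : ∀ t ∈ Set.Icc (0:ℝ) 1, ∃ R ∈ M, z ∈ R ∧ σ t ∈ rad z R := by
    rintro t ⟨ht0, ht1⟩
    obtain ⟨εP, hεP, hmemP⟩ := rad_small (poly_convex hPpoly) hzP hv₀C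
    obtain ⟨εQ, hεQ, hmemQ⟩ := rad_small (poly_convex hQpoly) hzQ hv₁K
    have hmm : ∀ s : ℝ, 0 < s → s ≤ min εP εQ → z + s • σ t ∈ ⋃₀ M := by
      intro s hs hsle
      have h1 : z + s • v₀ ∈ P := hmemP s hs.le (le_trans hsle (min_le_left _ _))
      have h2 : z + s • v₁ ∈ Q := hmemQ s hs.le (le_trans hsle (min_le_right _ _))
      have hU1 : z + s • v₀ ∈ ⋃₀ M := ⟨P, hP, h1⟩
      have hU2 : z + s • v₁ ∈ ⋃₀ M := ⟨Q, hQ, h2⟩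
      have hcombo := hconv hU1 hU2 (by linarith : (0:ℝ) ≤ 1 - t) ht0 (by ring)
      have heq : (1 - t) • (z + s • v₀) + t • (z + s • v₁) = z + s • σ t := by
        rw [hσ]; module
      rwa [heq] at hcombo
    exact rad_cover hfin hpoly (lt_min hεP hεQ) hmm
  -- the walking set
  set T : Set ℝ := {t | t ∈ Set.Icc (0:ℝ) 1 ∧ ∃ R ∈ M, z ∈ R ∧ σ t ∈ rad z R ∧
    v ∈ rad z R ∧ -v ∈ rad z R} with hT
  have hTclosed : IsClosed T := by
    have hTeq : T = ⋃ R ∈ (MF.filter (fun R => z ∈ R ∧ v ∈ rad z R ∧ -v ∈ rad z R)),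
        (Set.Icc (0:ℝ) 1 ∩ σ ⁻¹' (rad z R)) := by
      ext t
      simp only [hT, Set.mem_setOf_eq, Set.mem_iUnion, Set.mem_inter_iff,
        Set.mem_preimage, Finset.mem_filter, hMF, hfin.mem_toFinset]
      constructor
      · rintro ⟨htI, R, hR, hzR, hσR, hvR, hvR'⟩
        exact ⟨R, ⟨⟨hR, hzR, hvR, hvR'⟩, htI, hσR⟩⟩
      · rintro ⟨R, ⟨⟨hR, hzR, hvR, hvR'⟩, htI, hσR⟩⟩
        exact ⟨htI, R, hR, hzR, hσR, hvR, hvR'⟩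
    rw [hTeq]
    apply Set.Finite.isClosed_biUnion (Finset.finite_toSet _)
    intro R hR
    simp only [Finset.coe_filter, Set.mem_setOf_eq, Finset.mem_coe, hMF,
      hfin.mem_toFinset] at hR
    exact isClosed_Icc.inter (IsClosed.preimage hσcont
      (rad_poly_closed (hpoly R hR.1) hR.2.1))
  have h0T : (0:ℝ) ∈ T := by
    refine ⟨⟨le_rfl, zero_le_one⟩, P, hP, hzP, ?_, hv, hv'⟩
    have : σ 0 = v₀ := by rw [hσ]; simp
    rw [this]; exact hv₀C
  have hTbdd : BddAbove T := ⟨1, fun t ht => ht.1.2⟩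
  set t₀ : ℝ := sSup T with ht₀def
  have ht₀T : t₀ ∈ T := hTclosed.csSup_mem ⟨0, h0T⟩ hTbdd
  have ht₀1 : t₀ ≤ 1 := ht₀T.1.2
  have ht₀0 : 0 ≤ t₀ := ht₀T.1.1
  obtain ⟨_, R₀, hR₀M, hzR₀, hσR₀, hvR₀, hv'R₀⟩ := ht₀T
  -- the key final step, given a member whose cone contains v₁ and ±v
  have final : ∀ R₁ ∈ M, z ∈ R₁ → v₁ ∈ rad z R₁ → v ∈ rad z R₁ → -v ∈ rad z R₁ →
      v ∈ rad z Q := by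
    intro R₁ hR₁M hzR₁ hv₁R₁ hvR₁ hv'R₁
    obtain ⟨hv₁K', ε₁, hε₁, hball₁⟩ := hv₁vint
    have hR₁conv := rad_poly_convex (hpoly _ hR₁M) hzR₁
    have hCK : ∀ c ∈ rad z R₁, c - v₁ ∈ vectorSpan ℝ (rad z R₁ ∩ rad z Q) := by
      intro c hc
      have hcV : c ∈ V := hradsubV R₁ hR₁M hzR₁ hc
      have hv₁V : v₁ ∈ V := hradsubV Q hQ hzQ hv₁K
      set st : ℝ := min (1/2) (ε₁ / (2 * (‖c - v₁‖ + 1))) with hst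
      have hstpos : 0 < st := lt_min (by norm_num) (by positivity)
      have hst1 : st ≤ 1 := le_trans (min_le_left _ _) (by norm_num)
      have hsmall : ‖st • (c - v₁)‖ < ε₁ := by
        rw [norm_smul, Real.norm_eq_abs, abs_of_pos hstpos]
        have h1 : st ≤ ε₁ / (2*(‖c - v₁‖+1)) := min_le_right _ _
        calc st * ‖c - v₁‖ ≤ (ε₁ / (2*(‖c-v₁‖+1))) * ‖c-v₁‖ :=
              mul_le_mul_of_nonneg_right h1 (norm_nonneg _)
          _ < ε₁ := by
              rw [div_mul_eq_mul_div, div_lt_iff₀ (by positivity)]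
              nlinarith [norm_nonneg (c - v₁)]
      have hpt : v₁ + st • (c - v₁) ∈ rad z R₁ ∩ rad z Q := by
        constructor
        · exact Convex.add_smul_sub_mem hR₁conv hv₁R₁ hc ⟨hstpos.le, hst1⟩
        · exact hball₁ _ (Submodule.smul_mem V st (Submodule.sub_mem V hcV hv₁V)) hsmall
      have hv₁mem : v₁ ∈ rad z R₁ ∩ rad z Q := ⟨hv₁R₁, hv₁K⟩
      have hdiff : (v₁ + st • (c - v₁)) -ᵥ v₁ ∈ vectorSpan ℝ (rad z R₁ ∩ rad z Q) :=
        vsub_mem_vectorSpan ℝ hpt hv₁mem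
      have heq : (v₁ + st • (c - v₁)) -ᵥ v₁ = st • (c - v₁) := by
        rw [vsub_eq_sub]; abel
      rw [heq] at hdiff
      have h2 := Submodule.smul_mem (vectorSpan ℝ (rad z R₁ ∩ rad z Q)) st⁻¹ hdiff
      rwa [smul_smul, inv_mul_cancel₀ (ne_of_gt hstpos), one_smul] at h2
    have hbig : vectorSpan ℝ (rad z R₁ ∩ rad z Q) ≤ vectorSpan ℝ (R₁ ∩ Q) := by
      rw [← rad_inter (poly_convex (hpoly _ hR₁M)) (poly_convex hQpoly) hzR₁ hzQ]
      calc vectorSpan ℝ (rad z (R₁ ∩ Q)) ≤ Submodule.span ℝ (rad z (R₁ ∩ Q)) :=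
            vectorSpan_le_span _
        _ = vectorSpan ℝ (R₁ ∩ Q) := span_rad_eq ⟨hzR₁, hzQ⟩
    have hVle : V ≤ vectorSpan ℝ (R₁ ∩ Q) := by
      have h1 : V = vectorSpan ℝ (rad z R₁) := (hvsC R₁ hR₁M hzR₁).symm
      rw [h1, vectorSpan_eq_span_vsub_set_right ℝ hv₁R₁]
      apply Submodule.span_le.2
      rintro w ⟨c, hc, rfl⟩
      exact hbig (hCK c hc)
    have hrk : d ≤ Module.finrank ℝ (vectorSpan ℝ (R₁ ∩ Q)) + 1 := by
      have := Submodule.finrank_mono hVle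
      omega
    exact (key R₁ hR₁M Q hQ hzR₁ hzQ hvR₁ hv'R₁ hrk).1
  -- case t₀ = 1 : done
  rcases eq_or_lt_of_le ht₀1 with ht₀eq | ht₀lt
  · have hσ1 : σ t₀ = v₁ := by rw [ht₀eq, hσ]; simp
    rw [hσ1] at hσR₀
    exact final R₀ hR₀M hzR₀ hσR₀ hvR₀ hv'R₀
  -- case t₀ < 1 : contradiction with sSup
  · exfalso
    set Bc : Finset (Set (Euc n)) :=
      MF.filter (fun R => z ∈ R ∧ σ t₀ ∉ rad z R) with hBc
    have hδall : ∀ R ∈ Bc, ∃ δ : ℝ, 0 < δ ∧ ∀ t : ℝ, |t - t₀| < δ → σ t ∉ rad z R := by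
      intro R hR
      simp only [hBc, Finset.mem_filter, hMF, hfin.mem_toFinset] at hR
      obtain ⟨hRM, hzR, hσR⟩ := hR
      have hclosed : IsClosed (σ ⁻¹' (rad z R)) :=
        IsClosed.preimage hσcont (rad_poly_closed (hpoly R hRM) hzR)
      have hmem : t₀ ∈ (σ ⁻¹' (rad z R))ᶜ := hσR
      obtain ⟨δ, hδ, hball⟩ := Metric.isOpen_iff.1 hclosed.isOpen_compl t₀ hmem
      refine ⟨δ, hδ, fun t ht => ?_⟩
      have : t ∈ Metric.ball t₀ δ := by rwa [Metric.mem_ball, Real.dist_eq]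
      exact hball this
    choose! δf hδfpos hδf using hδall
    set δ : ℝ := min (1 - t₀)
      (if hBne : Bc.Nonempty then (Bc.image δf).min' (hBne.image _) else 1) with hδdef
    have hδpos : 0 < δ := by
      apply lt_min (by linarith)
      split_ifs with hBne
      · apply (Finset.lt_min'_iff _ _).2
        intro y hy
        obtain ⟨R, hR, rfl⟩ := Finset.mem_image.1 hy
        exact hδfpos R hR
      · norm_num
    have hδle : ∀ R ∈ Bc, δ ≤ δf R := by
      intro R hR
      have hBne : Bc.Nonempty := ⟨R, hR⟩
      calc δ ≤ _ := min_le_right _ _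
        _ ≤ δf R := by
          rw [dif_pos hBne]
          exact Finset.min'_le _ _ (Finset.mem_image_of_mem _ hR)
    set t₁ : ℝ := t₀ + δ/2 with ht₁def
    have ht₁Icc : t₁ ∈ Set.Icc (0:ℝ) 1 := by
      constructor
      · rw [ht₁def]; linarith [ht₀0, hδpos]
      · have hh : δ ≤ 1 - t₀ := min_le_left _ _
        rw [ht₁def]; linarith [ht₀1, hδpos, hh]
    obtain ⟨R', hR'M, hzR', hσR'⟩ := hcover t₁ ht₁Icc
    have hσt₀R' : σ t₀ ∈ rad z R' := by
      by_contra hcon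
      have hR'Bc : R' ∈ Bc := by
        simp only [hBc, Finset.mem_filter, hMF, hfin.mem_toFinset]
        exact ⟨hR'M, hzR', hcon⟩
      have h1 := hδf R' hR'Bc t₁ (by
        rw [ht₁def]
        rw [add_sub_cancel_left, abs_of_pos (by linarith)]
        have := hδle R' hR'Bc
        linarith)
      exact h1 hσR'
    -- transfer ±v from R₀ to R'
    have hnotbad : ¬ (Module.finrank ℝ (vectorSpan ℝ (R₀ ∩ R')) + 2 ≤ d) := by
      intro hbad
      have hbcondP : bcond (R₀, R') := ⟨hR₀M, hR'M, hzR₀, hzR', hbad⟩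
      have hmem : σ t₀ ∈ E (R₀, R') := by
        rw [hE]
        simp only [if_pos hbcondP]
        exact ⟨hσR₀, hσt₀R'⟩
      exact havoid t₀ ⟨ht₀0, ht₀1⟩ (R₀, R') hmem
    have hkey := key R₀ hR₀M R' hR'M hzR₀ hzR' hvR₀ hv'R₀ (by omega)
    have ht₁T : t₁ ∈ T := ⟨ht₁Icc, R', hR'M, hzR', hσR', hkey.1, hkey.2⟩
    have : t₁ ≤ t₀ := le_csSup hTbdd ht₁T
    rw [ht₁def] at this
    linarith


lemma small_smul (u : Euc n) {ε : ℝ} (hε : 0 < ε) :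
    ∃ s : ℝ, 0 < s ∧ s ≤ 1 ∧ ‖s • u‖ < ε := by
  have hpos : (0:ℝ) < min 1 (ε / (2 * (‖u‖ + 1))) := lt_min one_pos (by positivity)
  refine ⟨min 1 (ε / (2 * (‖u‖ + 1))), hpos, min_le_left _ _, ?_⟩
  rw [norm_smul, Real.norm_eq_abs, abs_of_pos hpos]
  have h1 : min 1 (ε / (2*(‖u‖+1))) ≤ ε / (2*(‖u‖+1)) := min_le_right _ _
  calc _ ≤ (ε / (2*(‖u‖+1))) * ‖u‖ := mul_le_mul_of_nonneg_right h1 (norm_nonneg _)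
    _ < ε := by
        rw [div_mul_eq_mul_div, div_lt_iff₀ (by positivity)]
        nlinarith [norm_nonneg u]

lemma convex_eqs (J : Finset (LF n)) : Convex ℝ (eqs J) := by
  intro x hx y hy a b ha hb hab h hh
  have h1 := hx h hh
  have h2 := hy h hh
  show h.1 (a • x + b • y) = h.2
  have : h.1 (a • x + b • y) = a * h.1 x + b * h.1 y := by
    simp [map_add, map_smul, smul_eq_mul]
  rw [this, h1, h2, ← add_mul, hab, one_mul]

/-- The central lemma: the intersection of two members is a face of each. -/
lemma main_face {M : Set (Set (Euc n))} {d : ℕ} {V : Submodule ℝ (Euc n)}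
    (hfin : M.Finite)
    (hpoly : ∀ P ∈ M, IsPolyhedron P)
    (hconv : Convex ℝ (⋃₀ M))
    (hspan : ∀ P ∈ M, vectorSpan ℝ P = V)
    (hd : Module.finrank ℝ V = d)
    (hii : ∀ P ∈ M, ∀ Q ∈ M, (d : ℤ) - 1 ≤ polyDim (P ∩ Q) →
      IsFace P (P ∩ Q) ∧ IsFace Q (P ∩ Q))
    {P Q : Set (Euc n)} (hP : P ∈ M) (hQ : Q ∈ M) : IsFace P (P ∩ Q) := by
  classical
  by_cases hne : (P ∩ Q).Nonempty
  swap
  · rw [Set.not_nonempty_iff_eq_empty] at hne; rw [hne]; exact isFace_empty P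
  have hPpoly := hpoly P hP
  have hQpoly := hpoly Q hQ
  have hPQconv : Convex ℝ (P ∩ Q) := (poly_convex hPpoly).inter (poly_convex hQpoly)
  obtain ⟨z, hzPQ, εz, hεz, hballz⟩ := vint_nonempty hPQconv hne
  obtain ⟨I, hPI⟩ := isPolyhedron_sol hPpoly
  set J : Finset (LF n) := I.filter (fun h => h.1 z = h.2) with hJ
  set G : Set (Euc n) := P ∩ eqs J with hG
  have hJI : J ⊆ I := Finset.filter_subset _ _
  have hGface : IsFace P G := isFace_tight hPpoly.1 hPI hJI
  have hzP : z ∈ P := hzPQ.1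
  have hzQ : z ∈ Q := hzPQ.2
  have hzG : z ∈ G := ⟨hzP, fun h hh => (Finset.mem_filter.1 hh).2⟩
  have hGconv : Convex ℝ G := (poly_convex hPpoly).inter (convex_eqs J)
  -- z is a relative interior point of G
  have hGvint : z ∈ vint (vectorSpan ℝ G) G := by
    have hstrict : ∀ h ∈ I \ J, h.1 z < h.2 := by
      intro h hh
      obtain ⟨hhI, hhJ⟩ := Finset.mem_sdiff.1 hh
      have hle : h.1 z ≤ h.2 := (hPI ▸ hzP) h hhI
      rcases lt_or_eq_of_le hle with hlt | heq
      · exact hlt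
      · exact absurd (Finset.mem_filter.2 ⟨hhI, heq⟩) hhJ
    obtain ⟨ε, hε, hball⟩ := sol_ball hstrict
    refine ⟨hzG, ε, hε, fun w hw hwε => ?_⟩
    have hker : ∀ h ∈ J, h.1 w = 0 := by
      intro h hh
      have hsub : vectorSpan ℝ G ≤ LinearMap.ker h.1 := by
        rw [vectorSpan_def]
        apply Submodule.span_le.2
        intro u hu
        obtain ⟨a, ha, b, hb, rfl⟩ := Set.mem_sub.1 hu
        have h1 : h.1 a = h.2 := ha.2 h hh
        have h2 : h.1 b = h.2 := hb.2 h hh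
        simp [LinearMap.mem_ker, map_sub, h1, h2]
      have := hsub hw
      simpa [LinearMap.mem_ker] using this
    have hwsol : z + w ∈ sol (I \ J) := hball w hwε
    constructor
    · rw [hPI]
      intro h hh
      by_cases hhJ : h ∈ J
      · have : h.1 (z + w) = h.2 := by
          rw [map_add, hker h hhJ, add_zero]
          exact (Finset.mem_filter.1 hhJ).2
        exact this.le
      · exact hwsol h (Finset.mem_sdiff.2 ⟨hh, hhJ⟩)
    · intro h hh
      show h.1 (z + w) = h.2
      have hma : h.1 (z + w) = h.1 z + h.1 w := map_add _ _ _
      rw [hma, hker h hh, add_zero]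
      exact (Finset.mem_filter.1 hh).2
  -- extremality: P ∩ Q ⊆ G
  have hPQG : P ∩ Q ⊆ G := by
    rintro x ⟨hxP, hxQ⟩
    refine ⟨hxP, fun h hh => ?_⟩
    obtain ⟨hhI, hhz⟩ := Finset.mem_filter.1 hh
    have hxle : h.1 x ≤ h.2 := (hPI ▸ hxP) h hhI
    have hwmem : z - x ∈ vectorSpan ℝ (P ∩ Q) := by
      have := vsub_mem_vectorSpan ℝ hzPQ (⟨hxP, hxQ⟩ : x ∈ P ∩ Q)
      rwa [vsub_eq_sub] at this
    obtain ⟨s, hspos, _, hsmall⟩ := small_smul (z - x) hεz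
    have hmem : z + s • (z - x) ∈ P ∩ Q :=
      hballz _ (Submodule.smul_mem _ s hwmem) hsmall
    have hle2 : h.1 (z + s • (z - x)) ≤ h.2 := (hPI ▸ hmem.1) h hhI
    have hexp : h.1 (z + s • (z - x)) = h.2 + s * (h.2 - h.1 x) := by
      simp only [map_add, map_smul, map_sub, smul_eq_mul, hhz]
    rw [hexp] at hle2
    show h.1 x = h.2
    nlinarith
  -- exit argument: G ⊆ Q
  have hQclosed := poly_closed hQpoly
  have hGQ : G ⊆ Q := by
    by_contra hcon
    have hvint_sub : ¬ (vint (vectorSpan ℝ G) G ⊆ Q) := by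
      intro hsub
      apply hcon
      intro g hg
      have hpath : ∀ k : ℕ, z + (1 - 1/(k+1 : ℝ)) • (g - z) ∈ Q := by
        intro k
        apply hsub
        apply vint_combo hGconv hGvint hg
        · have h1 : (0:ℝ) < 1/(k+1 : ℝ) := by positivity
          have h2 : 1/(k+1 : ℝ) ≤ 1 := by
            rw [div_le_one (by positivity)]
            linarith [Nat.cast_nonneg (α := ℝ) k]
          linarith
        · have h1 : (0:ℝ) < 1/(k+1 : ℝ) := by positivity
          linarith
      have htend : Filter.Tendsto (fun k : ℕ => z + (1 - 1/(k+1 : ℝ)) • (g - z))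
          Filter.atTop (nhds (z + (1 - 0 : ℝ) • (g - z))) := by
        apply Filter.Tendsto.const_add
        apply Filter.Tendsto.smul_const
        exact Filter.Tendsto.const_sub 1 tendsto_one_div_add_atTop_nhds_zero_nat
      have hgQ : z + ((1 - 0 : ℝ)) • (g - z) ∈ Q :=
        hQclosed.mem_of_tendsto htend (Filter.Eventually.of_forall hpath)
      have : z + ((1 - 0:ℝ)) • (g - z) = g := by norm_num
      rwa [this] at hgQ
    obtain ⟨y, hy, hyQ⟩ := Set.not_subset.1 hvint_sub
    set pt : ℝ → Euc n := fun t => z + t • (y - z) with hpt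
    have hptcont : Continuous pt := continuous_const.add (continuous_id.smul continuous_const)
    set Ts : Set ℝ := Set.Icc (0:ℝ) 1 ∩ pt ⁻¹' Q with hTs
    have hTsclosed : IsClosed Ts := isClosed_Icc.inter (IsClosed.preimage hptcont hQclosed)
    have h0Ts : (0:ℝ) ∈ Ts := by
      refine ⟨⟨le_rfl, zero_le_one⟩, ?_⟩
      show pt 0 ∈ Q
      rw [hpt]
      simpa using hzQ
    have hTsbdd : BddAbove Ts := ⟨1, fun t ht => ht.1.2⟩
    set ts : ℝ := sSup Ts with htsdef
    have htsTs : ts ∈ Ts := hTsclosed.csSup_mem ⟨0, h0Ts⟩ hTsbdd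
    have hts1 : ts ≤ 1 := htsTs.1.2
    have hts0 : 0 ≤ ts := htsTs.1.1
    have htsne1 : ts ≠ 1 := by
      intro h
      apply hyQ
      have h2 := htsTs.2
      rw [Set.mem_preimage, h] at h2
      have : pt 1 = y := by rw [hpt]; simp
      rwa [this] at h2
    have htslt : ts < 1 := lt_of_le_of_ne hts1 htsne1
    have hzstar : pt ts ∈ vint (vectorSpan ℝ G) G := by
      have h1 := vint_combo hGconv hGvint (vint_subset hy) hts0 htslt
      exact h1
    obtain ⟨hzsG, εs, hεs, hballs⟩ := hzstar
    have huvs : y - z ∈ vectorSpan ℝ G := by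
      have := vsub_mem_vectorSpan ℝ (vint_subset hy) hzG
      rwa [vsub_eq_sub] at this
    obtain ⟨c, hcpos, _, hcsmall⟩ := small_smul (y - z) hεs
    have hmem1 : pt ts + c • (y - z) ∈ G :=
      hballs _ (Submodule.smul_mem _ c huvs) hcsmall
    have hmem2 : pt ts + c • (-(y - z)) ∈ G := by
      apply hballs _ (Submodule.smul_mem _ c (Submodule.neg_mem _ huvs))
      rw [smul_neg, norm_neg]
      exact hcsmall
    have hradP : (y - z) ∈ rad (pt ts) P :=
      ⟨c, hcpos, (isFace_subset hGface) hmem1⟩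
    have hradP' : -(y - z) ∈ rad (pt ts) P :=
      ⟨c, hcpos, (isFace_subset hGface) hmem2⟩
    have hzsP : pt ts ∈ P := (isFace_subset hGface) hzsG
    have hzsQ : pt ts ∈ Q := htsTs.2
    have hradQ : (y - z) ∈ rad (pt ts) Q :=
      walk_lemma hfin hpoly hconv hspan hd hii hP hQ hzsP hzsQ hradP hradP'
    obtain ⟨εq, hεq, hmemq⟩ := hradQ
    have hQconv := poly_convex hQpoly
    set τ : ℝ := min (ts + εq) 1 with hτ
    have htsτ : ts ≤ τ := le_min (by linarith) hts1
    have hθ : ∃ θ : ℝ, 0 ≤ θ ∧ θ ≤ 1 ∧ τ = ts + θ * εq := by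
      refine ⟨(τ - ts)/εq, div_nonneg (by linarith) hεq.le, ?_, by field_simp; ring⟩
      rw [div_le_one hεq]
      have h5 : τ ≤ ts + εq := min_le_left _ _
      linarith
    obtain ⟨θ, hθ0, hθ1, hθeq⟩ := hθ
    have hptτ : pt τ ∈ Q := by
      have hseg := Convex.add_smul_sub_mem hQconv hzsQ hmemq ⟨hθ0, hθ1⟩
      have heq2 : pt ts + θ • (pt ts + εq • (y-z) - pt ts) = pt τ := by
        rw [hpt, hθeq]; module
      rwa [heq2] at hseg
    rcases le_or_gt (ts + εq) 1 with hle | hlt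
    · have hτTs : τ ∈ Ts := by
        refine ⟨⟨by linarith, by rw [hτ]; exact min_le_right _ _⟩, hptτ⟩
      have hcontra : τ ≤ ts := le_csSup hTsbdd hτTs
      rw [hτ, min_eq_left hle] at hcontra
      linarith
    · have hτ1 : τ = 1 := min_eq_right hlt.le
      apply hyQ
      have heq3 : pt 1 = y := by rw [hpt]; simp
      rw [hτ1, heq3] at hptτ
      exact hptτ
  have hGPQ : G ⊆ P ∩ Q := Set.subset_inter (isFace_subset hGface) hGQ
  have hfinal : P ∩ Q = G := Set.Subset.antisymm hPQG hGPQ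
  rw [hfinal]
  exact hGface

end ShortcutAux

open ShortcutAux

/-- the shortcut for collections of `d`-dimensional polyhedra with convex
support (Corollary `shortcut convex`). -/
theorem shortcut_convex {n : ℕ} (d : ℕ) (M : Set (Set (Euc n)))
    (hfin : M.Finite) (hne : M.Nonempty)
    (hpoly : ∀ P ∈ M, IsPolyhedron P ∧ polyDim P = (d : ℤ))
    (hconv : Convex ℝ (⋃₀ M))
    (hii : ∀ P ∈ M, ∀ Q ∈ M, (d : ℤ) - 1 ≤ polyDim (P ∩ Q) →
      IsFace P (P ∩ Q) ∧ IsFace Q (P ∩ Q)) :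
    IsPolyhedralComplex (withFaces M) := by
  classical
  obtain ⟨hspan, hd⟩ := hull_setup hfin hne hpoly hconv
  have hpoly' : ∀ P ∈ M, IsPolyhedron P := fun P hP => (hpoly P hP).1
  have hmain : ∀ P ∈ M, ∀ Q ∈ M, IsFace P (P ∩ Q) :=
    fun P hP Q hQ => main_face hfin hpoly' hconv hspan hd hii hP hQ
  refine ⟨?_, ?_, ?_, ?_, ?_⟩
  · have hsub : withFaces M ⊆ ⋃ P ∈ M, {F | IsFace P F ∧ F.Nonempty} := by
      rintro F ⟨P, hP, hF, hne'⟩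
      exact Set.mem_biUnion hP ⟨hF, hne'⟩
    exact Set.Finite.subset (Set.Finite.biUnion hfin
      (fun P hP => faces_finite (hpoly' P hP))) hsub
  · obtain ⟨P₀, hP₀⟩ := hne
    exact ⟨P₀, P₀, hP₀, isFace_self P₀, (hpoly P₀ hP₀).1.1⟩
  · rintro F ⟨P, hP, hF, hne'⟩
    exact isPolyhedron_face (hpoly' P hP) hF hne'
  · rintro F ⟨P, hP, hF, hne'⟩ G hG hGne
    exact ⟨P, hP, isFace_trans (hpoly' P hP) hF hG, hGne⟩
  · have hhalf : ∀ F F' : Set (Euc n), F ∈ withFaces M → F' ∈ withFaces M →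
        IsFace F (F ∩ F') := by
      rintro F F' ⟨P, hP, hFP, hFne⟩ ⟨Q, hQ, hF'Q, hF'ne⟩
      have hC : IsFace P (P ∩ Q) := hmain P hP Q hQ
      have hC' : IsFace Q (P ∩ Q) := by
        have h2 := hmain Q hQ P hP
        rwa [Set.inter_comm] at h2
      have hFsubP : F ⊆ P := isFace_subset hFP
      have hF'subQ : F' ⊆ Q := isFace_subset hF'Q
      have hFF'sub : F ∩ F' ⊆ P ∩ Q := Set.inter_subset_inter hFsubP hF'subQ
      by_cases hCne : (P ∩ Q).Nonempty
      swap
      · rw [Set.not_nonempty_iff_eq_empty] at hCne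
        have hFF'e : F ∩ F' = ∅ := Set.subset_empty_iff.1 (hCne ▸ hFF'sub)
        rw [hFF'e]; exact isFace_empty F
      have hCpoly : IsPolyhedron (P ∩ Q) := isPolyhedron_face (hpoly' P hP) hC hCne
      have hFC : IsFace P (F ∩ (P ∩ Q)) := isFace_inter (hpoly' P hP) hFP hC
      have hFCC : IsFace (P ∩ Q) (F ∩ (P ∩ Q)) :=
        isFace_of_subset_face (hpoly' P hP) hC hFC Set.inter_subset_right
      have hFCF : IsFace F (F ∩ (P ∩ Q)) :=
        isFace_of_subset_face (hpoly' P hP) hFP hFC Set.inter_subset_left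
      have hF'C : IsFace Q (F' ∩ (P ∩ Q)) := isFace_inter (hpoly' Q hQ) hF'Q hC'
      have hF'CC : IsFace (P ∩ Q) (F' ∩ (P ∩ Q)) :=
        isFace_of_subset_face (hpoly' Q hQ) hC' hF'C Set.inter_subset_right
      have hinter : IsFace (P ∩ Q) ((F ∩ (P ∩ Q)) ∩ (F' ∩ (P ∩ Q))) :=
        isFace_inter hCpoly hFCC hF'CC
      have hFCface : IsFace (F ∩ (P ∩ Q)) ((F ∩ (P ∩ Q)) ∩ (F' ∩ (P ∩ Q))) :=
        isFace_of_subset_face hCpoly hFCC hinter Set.inter_subset_left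
      have hFpoly : IsPolyhedron F := isPolyhedron_face (hpoly' P hP) hFP hFne
      have htrans : IsFace F ((F ∩ (P ∩ Q)) ∩ (F' ∩ (P ∩ Q))) :=
        isFace_trans hFpoly hFCF hFCface
      have heq : (F ∩ (P ∩ Q)) ∩ (F' ∩ (P ∩ Q)) = F ∩ F' := by
        apply Set.Subset.antisymm
        · intro x hx; exact ⟨hx.1.1, hx.2.1⟩
        · intro x hx; exact ⟨⟨hx.1, hFF'sub hx⟩, hx.2, hFF'sub hx⟩
      rwa [heq] at htrans
    intro F hFmem F' hF'mem
    refine ⟨hhalf F F' hFmem hF'mem, ?_⟩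
    have h3 := hhalf F' F hF'mem hFmem
    rwa [Set.inter_comm] at h3
end
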